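/- arXiv:math/0703345 — 7 statements merged into one kernel-verified Lean document; each statement's English description precedes it below -/
import Mathlib

section
/- Let (A, E) be a non-commutative probability space. Let X_1, …, X_k be self-adjoint elements with E(X_i) = 0 satisfying Condition A (with indices restricted to {1, …, k}). Let Y_k, Y_{k+1}, …, Y_N be self-adjoint elements with E(Y_j) = 0 and E(Y_k^2) = E(X_k^2), such that the family consisting of the unital subalgebra B generated by X_1, …, X_k together with the elements Y_k, Y_{k+1}, …, Y_N is free, in the sense that E(a_1 ⋯ a_m) = 0 whenever each a_t is either an element of B or a complex polynomial evaluated at a single Y_j, E(a_t) = 0 for every t, and no two consecutive a_t, a_{t+1} both come from B or both come from the same Y_j. Put Z = X_1 + … + X_{k−1} + Y_{k+1} + … + Y_N. Then for all nonnegative integers p, q, s: E(Z^p X_k Z^q) = 0, E(Z^p Y_k Z^q) = 0, and E(Z^p X_k Z^q X_k Z^s) = E(Z^p Y_k Z^q Y_k Z^s). -/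
open scoped ComplexOrder

namespace LSwap

open scoped Classical

section
variable {A : Type*} [Ring A] [Algebra ℂ A]
set_option linter.unusedSectionVars false

/-- product of the word -/
def wp (t : List (Option ℕ × A)) : A := (t.map Prod.snd).prod

@[simp] lemma wp_nil : wp ([] : List (Option ℕ × A)) = 1 := rfl

@[simp] lemma wp_cons (q : Option ℕ × A) (t : List (Option ℕ × A)) :
    wp (q :: t) = q.2 * wp t := by simp [wp]

@[simp] lemma wp_append (s t : List (Option ℕ × A)) : wp (s ++ t) = wp s * wp t := by
  simp [wp]

def B0 (k : ℕ) (X : ℕ → A) : Subalgebra ℂ A :=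
  Algebra.adjoin ℂ {a | ∃ i, 1 ≤ i ∧ i < k ∧ a = X i}

def Bfull (k : ℕ) (X : ℕ → A) : Subalgebra ℂ A :=
  Algebra.adjoin ℂ {a : A | ∃ i, 1 ≤ i ∧ i ≤ k ∧ a = X i}

lemma B0_le_Bfull (k : ℕ) (X : ℕ → A) : B0 k X ≤ Bfull k X := by
  apply Algebra.adjoin_mono
  rintro a ⟨i, h1, h2, rfl⟩
  exact ⟨i, h1, le_of_lt h2, rfl⟩

/-- valid generic letter -/
def okL (N k : ℕ) (X Y : ℕ → A) (q : Option ℕ × A) : Prop :=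
  (q.1 = none ∧ q.2 ∈ B0 k X) ∨
  (∃ j, q.1 = some j ∧ k + 1 ≤ j ∧ j ≤ N ∧ ∃ p : Polynomial ℂ, q.2 = Polynomial.aeval (Y j) p)

/-- admissible letter for the freeness hypothesis -/
def MEM (N k : ℕ) (X Y : ℕ → A) (q : Option ℕ × A) : Prop :=
  (q.1 = none ∧ q.2 ∈ Algebra.adjoin ℂ {a : A | ∃ i, 1 ≤ i ∧ i ≤ k ∧ a = X i}) ∨
  (∃ j, q.1 = some j ∧ k ≤ j ∧ j ≤ N ∧ ∃ p : Polynomial ℂ, q.2 = Polynomial.aeval (Y j) p)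

lemma MEM_of_okL {N k : ℕ} {X Y : ℕ → A} {q : Option ℕ × A} (h : okL N k X Y q) :
    MEM N k X Y q := by
  rcases h with ⟨h1, h2⟩ | ⟨j, h1, h2, h3, p, hp⟩
  · exact Or.inl ⟨h1, B0_le_Bfull k X h2⟩
  · exact Or.inr ⟨j, h1, le_trans (Nat.le_succ k) h2, h3, p, hp⟩

lemma okL_center {N k : ℕ} {X Y : ℕ → A} {q : Option ℕ × A} (h : okL N k X Y q) (c : ℂ) :
    okL N k X Y (q.1, q.2 - c • 1) := by
  rcases h with ⟨h1, h2⟩ | ⟨j, h1, h2, h3, p, hp⟩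
  · exact Or.inl ⟨h1, sub_mem h2 (Subalgebra.smul_mem _ (one_mem _) c)⟩
  · refine Or.inr ⟨j, h1, h2, h3, p - Polynomial.C c, ?_⟩
    rw [map_sub, hp, Polynomial.aeval_C, Algebra.algebraMap_eq_smul_one]

lemma okL_merge {N k : ℕ} {X Y : ℕ → A} {q q' : Option ℕ × A} (h : okL N k X Y q)
    (h' : okL N k X Y q') (ht : q.1 = q'.1) :
    okL N k X Y (q.1, q.2 * q'.2) := by
  rcases h with ⟨h1, h2⟩ | ⟨j, h1, h2, h3, p, hp⟩
  · rcases h' with ⟨h1', h2'⟩ | ⟨j', h1', _, _, _, _⟩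
    · exact Or.inl ⟨h1, mul_mem h2 h2'⟩
    · rw [ht, h1'] at h1; exact absurd h1 (by simp)
  · rcases h' with ⟨h1', h2'⟩ | ⟨j', h1', h2', h3', p', hp'⟩
    · rw [ht, h1'] at h1; exact absurd h1 (by simp)
    · have hj : j = j' := by
        rw [h1, h1'] at ht; exact Option.some.inj ht
      subst hj
      exact Or.inr ⟨j, h1, h2, h3, p * p', by rw [map_mul, hp, hp']⟩

/-- count of non-centered letters -/
noncomputable def cnt (E : A →ₗ[ℂ] ℂ) (t : List (Option ℕ × A)) : ℕ :=
  t.countP fun q => decide (E q.2 ≠ 0)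

@[simp] lemma cnt_nil (E : A →ₗ[ℂ] ℂ) : cnt E ([] : List (Option ℕ × A)) = 0 := rfl

lemma cnt_cons (E : A →ₗ[ℂ] ℂ) (q : Option ℕ × A) (t : List (Option ℕ × A)) :
    cnt E (q :: t) = (if E q.2 ≠ 0 then 1 else 0) + cnt E t := by
  by_cases h : E q.2 = 0 <;> simp [cnt, List.countP_cons, h, Nat.add_comm]

lemma cnt_append (E : A →ₗ[ℂ] ℂ) (s t : List (Option ℕ × A)) :
    cnt E (s ++ t) = cnt E s + cnt E t := by
  simp [cnt, List.countP_append]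

/-- find an adjacent equal-tag pair in a non-chain word -/
lemma exists_merge {t : List (Option ℕ × A)}
    (h : ¬ (t.map Prod.fst).Chain' (· ≠ ·)) :
    ∃ (t₁ : List (Option ℕ × A)) (q q' : Option ℕ × A) (t₂ : List (Option ℕ × A)), t = t₁ ++ q :: q' :: t₂ ∧ q.1 = q'.1 := by
  induction t with
  | nil => simp [List.Chain'] at h
  | cons a t ih =>
    rcases t with _ | ⟨b, t⟩
    · simp [List.Chain'] at h
    · rw [List.map_cons, List.map_cons, List.Chain', List.isChain_cons_cons] at h
      push_neg at h
      by_cases hab : a.1 = b.1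
      · exact ⟨[], a, b, t, rfl, hab⟩
      · obtain ⟨t₁, q, q', t₂, ht, hqq⟩ := ih (h hab)
        exact ⟨a :: t₁, q, q', t₂, by rw [ht]; rfl, hqq⟩


/-- generic reduction: to prove a (multilinear-compatible) statement about all valid
words, it suffices to prove it for alternating fully centered words, provided the
statement is stable under splitting off means and merging adjacent equal tags. -/
lemma reduce2 (E : A →ₗ[ℂ] ℂ) (hE1 : E 1 = 1) (N k : ℕ) (X Y : ℕ → A)
    (Φ : List (Option ℕ × A) → List (Option ℕ × A) → Prop)
    (hsplit₁ : ∀ v₁ (q : Option ℕ × A) v₂ w, E q.2 ≠ 0 →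
      Φ (v₁ ++ (q.1, q.2 - E q.2 • 1) :: v₂) w → Φ (v₁ ++ v₂) w → Φ (v₁ ++ q :: v₂) w)
    (hsplit₂ : ∀ v w₁ (q : Option ℕ × A) w₂, E q.2 ≠ 0 →
      Φ v (w₁ ++ (q.1, q.2 - E q.2 • 1) :: w₂) → Φ v (w₁ ++ w₂) → Φ v (w₁ ++ q :: w₂))
    (hmerge₁ : ∀ v₁ (q q' : Option ℕ × A) v₂ w, q.1 = q'.1 →
      Φ (v₁ ++ (q.1, q.2 * q'.2) :: v₂) w → Φ (v₁ ++ q :: q' :: v₂) w)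
    (hmerge₂ : ∀ v w₁ (q q' : Option ℕ × A) w₂, q.1 = q'.1 →
      Φ v (w₁ ++ (q.1, q.2 * q'.2) :: w₂) → Φ v (w₁ ++ q :: q' :: w₂))
    (hbase : ∀ v w, (∀ q ∈ v, okL N k X Y q) → (∀ q ∈ w, okL N k X Y q) →
      (v.map Prod.fst).Chain' (· ≠ ·) → (w.map Prod.fst).Chain' (· ≠ ·) →
      (∀ q ∈ v, E q.2 = 0) → (∀ q ∈ w, E q.2 = 0) → Φ v w) :
    ∀ v w, (∀ q ∈ v, okL N k X Y q) → (∀ q ∈ w, okL N k X Y q) → Φ v w := by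
  have Ecen : ∀ q : Option ℕ × A, E (q.2 - E q.2 • 1) = 0 := by
    intro q
    rw [map_sub, map_smul, hE1, smul_eq_mul, mul_one, sub_self]
  suffices H : ∀ n v w, (∀ q ∈ v, okL N k X Y q) → (∀ q ∈ w, okL N k X Y q) →
      2 * (v.length + w.length) + (cnt E v + cnt E w) < n → Φ v w by
    intro v w hv hw
    exact H (2 * (v.length + w.length) + (cnt E v + cnt E w) + 1) v w hv hw
      (Nat.lt_succ_self _)
  intro n
  induction n with
  | zero => intro v w _ _ h; omega
  | succ n ih =>
    intro v w hv hw hn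
    by_cases hun : ∀ q ∈ v ++ w, E q.2 = 0
    · simp only [List.mem_append] at hun
      by_cases hcv : (v.map Prod.fst).Chain' (· ≠ ·)
      · by_cases hcw : (w.map Prod.fst).Chain' (· ≠ ·)
        · exact hbase v w hv hw hcv hcw (fun q hq => hun q (Or.inl hq))
            (fun q hq => hun q (Or.inr hq))
        · obtain ⟨w₁, q, q', w₂, rfl, ht⟩ := exists_merge hcw
          refine hmerge₂ v w₁ q q' w₂ ht (ih v _ hv ?_ ?_)
          · intro r hr
            rcases List.mem_append.1 hr with h | h
            · exact hw r (by simp [h])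
            rcases List.mem_cons.1 h with h | h
            · subst h
              exact okL_merge (hw q (by simp)) (hw q' (by simp)) ht
            · exact hw r (by simp [h])
          · have e1 : cnt E (w₁ ++ (q.1, q.2 * q'.2) :: w₂)
                ≤ cnt E (w₁ ++ q :: q' :: w₂) + 1 := by
              rw [cnt_append, cnt_append, cnt_cons, cnt_cons, cnt_cons]
              split_ifs <;> omega
            have e2 : (w₁ ++ (q.1, q.2 * q'.2) :: w₂).length + 1
                = (w₁ ++ q :: q' :: w₂).length := by
              simp only [List.length_append, List.length_cons]; omega
            omega
      · obtain ⟨v₁, q, q', v₂, rfl, ht⟩ := exists_merge hcv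
        refine hmerge₁ v₁ q q' v₂ w ht (ih _ w ?_ hw ?_)
        · intro r hr
          rcases List.mem_append.1 hr with h | h
          · exact hv r (by simp [h])
          rcases List.mem_cons.1 h with h | h
          · subst h
            exact okL_merge (hv q (by simp)) (hv q' (by simp)) ht
          · exact hv r (by simp [h])
        · have e1 : cnt E (v₁ ++ (q.1, q.2 * q'.2) :: v₂)
              ≤ cnt E (v₁ ++ q :: q' :: v₂) + 1 := by
            rw [cnt_append, cnt_append, cnt_cons, cnt_cons, cnt_cons]
            split_ifs <;> omega
          have e2 : (v₁ ++ (q.1, q.2 * q'.2) :: v₂).length + 1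
              = (v₁ ++ q :: q' :: v₂).length := by
              simp only [List.length_append, List.length_cons]; omega
          omega
    · push_neg at hun
      obtain ⟨q, hq, hq0⟩ := hun
      rcases List.mem_append.1 hq with hqv | hqw
      · obtain ⟨v₁, v₂, rfl⟩ := List.append_of_mem hqv
        have hv' : ∀ r ∈ v₁ ++ v₂, okL N k X Y r := by
          intro r hr
          rcases List.mem_append.1 hr with h | h
          · exact hv r (by simp [h])
          · exact hv r (by simp [h])
        have hvc : ∀ r ∈ v₁ ++ (q.1, q.2 - E q.2 • 1) :: v₂, okL N k X Y r := by
          intro r hr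
          rcases List.mem_append.1 hr with h | h
          · exact hv r (by simp [h])
          rcases List.mem_cons.1 h with h | h
          · subst h; exact okL_center (hv q (by simp)) _
          · exact hv r (by simp [h])
        refine hsplit₁ v₁ q v₂ w hq0 (ih _ w hvc hw ?_) (ih _ w hv' hw ?_)
        · have e1 : cnt E (v₁ ++ (q.1, q.2 - E q.2 • 1) :: v₂) + 1
              = cnt E (v₁ ++ q :: v₂) := by
            rw [cnt_append, cnt_append, cnt_cons, cnt_cons]
            rw [if_neg (by simp [Ecen q]), if_pos hq0]
            omega
          have e2 : (v₁ ++ (q.1, q.2 - E q.2 • 1) :: v₂).length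
              = (v₁ ++ q :: v₂).length := by
              simp only [List.length_append, List.length_cons]
          omega
        · have e1 : cnt E (v₁ ++ v₂) ≤ cnt E (v₁ ++ q :: v₂) := by
            rw [cnt_append, cnt_append, cnt_cons]; omega
          have e2 : (v₁ ++ v₂).length + 1 = (v₁ ++ q :: v₂).length := by
              simp only [List.length_append, List.length_cons]; omega
          omega
      · obtain ⟨w₁, w₂, rfl⟩ := List.append_of_mem hqw
        have hw' : ∀ r ∈ w₁ ++ w₂, okL N k X Y r := by
          intro r hr
          rcases List.mem_append.1 hr with h | h
          · exact hw r (by simp [h])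
          · exact hw r (by simp [h])
        have hwc : ∀ r ∈ w₁ ++ (q.1, q.2 - E q.2 • 1) :: w₂, okL N k X Y r := by
          intro r hr
          rcases List.mem_append.1 hr with h | h
          · exact hw r (by simp [h])
          rcases List.mem_cons.1 h with h | h
          · subst h; exact okL_center (hw q (by simp)) _
          · exact hw r (by simp [h])
        refine hsplit₂ v w₁ q w₂ hq0 (ih v _ hv hwc ?_) (ih v _ hv hw' ?_)
        · have e1 : cnt E (w₁ ++ (q.1, q.2 - E q.2 • 1) :: w₂) + 1
              = cnt E (w₁ ++ q :: w₂) := by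
            rw [cnt_append, cnt_append, cnt_cons, cnt_cons]
            rw [if_neg (by simp [Ecen q]), if_pos hq0]
            omega
          have e2 : (w₁ ++ (q.1, q.2 - E q.2 • 1) :: w₂).length
              = (w₁ ++ q :: w₂).length := by
              simp only [List.length_append, List.length_cons]
          omega
        · have e1 : cnt E (w₁ ++ w₂) ≤ cnt E (w₁ ++ q :: w₂) := by
            rw [cnt_append, cnt_append, cnt_cons]; omega
          have e2 : (w₁ ++ w₂).length + 1 = (w₁ ++ q :: w₂).length := by
              simp only [List.length_append, List.length_cons]; omega
          omega

section Free

variable (E : A →ₗ[ℂ] ℂ) (N k : ℕ) (X Y : ℕ → A)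

lemma free0 
    (hfree : ∀ L : List (Option ℕ × A), L ≠ [] →
      (L.map Prod.fst).Chain' (· ≠ ·) →
      (∀ q ∈ L,
        (q.1 = none ∧ q.2 ∈ Algebra.adjoin ℂ {a : A | ∃ i, 1 ≤ i ∧ i ≤ k ∧ a = X i}) ∨
        (∃ j, q.1 = some j ∧ k ≤ j ∧ j ≤ N ∧
          ∃ p : Polynomial ℂ, q.2 = Polynomial.aeval (Y j) p)) →
      (∀ q ∈ L, E q.2 = 0) →
      E ((L.map Prod.snd).prod) = 0)
    (w : List (Option ℕ × A)) (hne : w ≠ [])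
    (hval : ∀ q ∈ w, okL N k X Y q)
    (hch : (w.map Prod.fst).Chain' (· ≠ ·))
    (hcen : ∀ q ∈ w, E q.2 = 0) : E (wp w) = 0 :=
  hfree w hne hch (fun q hq => MEM_of_okL (hval q hq)) hcen

lemma free1 
    (hfree : ∀ L : List (Option ℕ × A), L ≠ [] →
      (L.map Prod.fst).Chain' (· ≠ ·) →
      (∀ q ∈ L,
        (q.1 = none ∧ q.2 ∈ Algebra.adjoin ℂ {a : A | ∃ i, 1 ≤ i ∧ i ≤ k ∧ a = X i}) ∨
        (∃ j, q.1 = some j ∧ k ≤ j ∧ j ≤ N ∧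
          ∃ p : Polynomial ℂ, q.2 = Polynomial.aeval (Y j) p)) →
      (∀ q ∈ L, E q.2 = 0) →
      E ((L.map Prod.snd).prod) = 0)
    (s : Option ℕ × A) (hm : MEM N k X Y s) (hs : E s.2 = 0)
    (w : List (Option ℕ × A))
    (hval : ∀ q ∈ w, okL N k X Y q)
    (hch : (w.map Prod.fst).Chain' (· ≠ ·))
    (hcen : ∀ q ∈ w, E q.2 = 0)
    (hj : ∀ y ∈ w.head?, s.1 ≠ y.1) : E (s.2 * wp w) = 0 := by
  have h := hfree (s :: w) (by simp)
    (by
      rw [List.map_cons, List.Chain', List.isChain_cons]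
      refine ⟨?_, hch⟩
      intro y hy
      rw [List.head?_map] at hy
      rcases w with _ | ⟨a, w'⟩
      · simp at hy
      · simp only [List.head?_cons, Option.map_some, Option.mem_def,
          Option.some.injEq] at hy
        rw [← hy]
        exact hj a rfl)
    (by
      intro q hq
      rcases List.mem_cons.1 hq with h | h
      · subst h; exact hm
      · exact MEM_of_okL (hval q h))
    (by
      intro q hq
      rcases List.mem_cons.1 hq with h | h
      · subst h; exact hs
      · exact hcen q h)
  simpa [wp] using h

lemma free2 
    (hfree : ∀ L : List (Option ℕ × A), L ≠ [] →
      (L.map Prod.fst).Chain' (· ≠ ·) →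
      (∀ q ∈ L,
        (q.1 = none ∧ q.2 ∈ Algebra.adjoin ℂ {a : A | ∃ i, 1 ≤ i ∧ i ≤ k ∧ a = X i}) ∨
        (∃ j, q.1 = some j ∧ k ≤ j ∧ j ≤ N ∧
          ∃ p : Polynomial ℂ, q.2 = Polynomial.aeval (Y j) p)) →
      (∀ q ∈ L, E q.2 = 0) →
      E ((L.map Prod.snd).prod) = 0)
    (s₁ s₂ : Option ℕ × A) (hm₁ : MEM N k X Y s₁) (hm₂ : MEM N k X Y s₂)
    (hs₁ : E s₁.2 = 0) (hs₂ : E s₂.2 = 0)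
    (v w : List (Option ℕ × A)) (hvne : v ≠ [])
    (hvval : ∀ q ∈ v, okL N k X Y q) (hwval : ∀ q ∈ w, okL N k X Y q)
    (hvch : (v.map Prod.fst).Chain' (· ≠ ·))
    (hwch : (w.map Prod.fst).Chain' (· ≠ ·))
    (hvcen : ∀ q ∈ v, E q.2 = 0) (hwcen : ∀ q ∈ w, E q.2 = 0)
    (hj₁ : ∀ y ∈ v.head?, s₁.1 ≠ y.1)
    (hj₂ : ∀ y ∈ v.getLast?, y.1 ≠ s₂.1)
    (hj₃ : ∀ y ∈ w.head?, s₂.1 ≠ y.1) :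
    E (s₁.2 * wp v * (s₂.2 * wp w)) = 0 := by
  have hch2 : ((s₂ :: w).map Prod.fst).Chain' (· ≠ ·) := by
    rw [List.map_cons, List.Chain', List.isChain_cons]
    refine ⟨?_, hwch⟩
    intro y hy
    rw [List.head?_map] at hy
    rcases w with _ | ⟨a, w'⟩
    · simp at hy
    · simp only [List.head?_cons, Option.map_some, Option.mem_def,
        Option.some.injEq] at hy
      rw [← hy]
      exact hj₃ a rfl
  have hchmid : ((v ++ s₂ :: w).map Prod.fst).Chain' (· ≠ ·) := by
    rw [List.map_append, List.Chain', List.isChain_append]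
    refine ⟨hvch, hch2, ?_⟩
    intro x hx y hy
    rw [List.getLast?_map] at hx
    simp only [List.map_cons, List.head?_cons, Option.mem_def,
      Option.some.injEq] at hy
    rcases Option.map_eq_some_iff.1 hx with ⟨a, ha, rfl⟩
    rw [← hy]
    exact hj₂ a ha
  have h := hfree (s₁ :: (v ++ s₂ :: w)) (by simp)
    (by
      rw [List.map_cons, List.Chain', List.isChain_cons]
      refine ⟨?_, hchmid⟩
      intro y hy
      rw [List.head?_map, List.head?_append_of_ne_nil _ hvne] at hy
      rcases v with _ | ⟨a, v'⟩
      · exact absurd rfl hvne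
      · simp only [List.head?_cons, Option.map_some, Option.mem_def,
          Option.some.injEq] at hy
        rw [← hy]
        exact hj₁ a rfl)
    (by
      intro q hq
      rcases List.mem_cons.1 hq with h | h
      · subst h; exact hm₁
      rcases List.mem_append.1 h with h | h
      · exact MEM_of_okL (hvval q h)
      rcases List.mem_cons.1 h with h | h
      · subst h; exact hm₂
      · exact MEM_of_okL (hwval q h))
    (by
      intro q hq
      rcases List.mem_cons.1 hq with h | h
      · subst h; exact hs₁
      rcases List.mem_append.1 h with h | h
      · exact hvcen q h
      rcases List.mem_cons.1 h with h | h
      · subst h; exact hs₂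
      · exact hwcen q h)
  have e : ((s₁ :: (v ++ s₂ :: w)).map Prod.snd).prod
      = s₁.2 * wp v * (s₂.2 * wp w) := by
    simp [wp, mul_assoc]
  rw [e] at h
  exact h

end Free

section CondA

variable (E : A →ₗ[ℂ] ℂ) (N k : ℕ) (X Y : ℕ → A)

/-- turn a list of generators of `B0` into an index list -/
lemma listrep (l : List A) (hl : ∀ y ∈ l, y ∈ {a : A | ∃ i, 1 ≤ i ∧ i < k ∧ a = X i}) :
    ∃ L : List ℕ, (∀ i ∈ L, 1 ≤ i ∧ i < k) ∧ (L.map X).prod = l.prod := by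
  induction l with
  | nil => exact ⟨[], by simp, by simp⟩
  | cons a l ih =>
    obtain ⟨L, hL, hprod⟩ := ih (fun y hy => hl y (by simp [hy]))
    obtain ⟨i, h1, h2, rfl⟩ := hl a (by simp)
    refine ⟨i :: L, ?_, by simp [hprod]⟩
    intro j hj
    rcases List.mem_cons.1 hj with h | h
    · subst h; exact ⟨h1, h2⟩
    · exact hL j h

lemma EL1 (hk : 1 ≤ k)
    (hA1 : ∀ j, 1 ≤ j → j ≤ k →
      ∀ L : List ℕ, (∀ i ∈ L, 1 ≤ i ∧ i ≤ k) → (∀ i ∈ L, i ≠ j) →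
      E (X j * (L.map X).prod) = 0) :
    ∀ b ∈ B0 k X, E (X k * b) = 0 := by
  intro b hb
  have hb' : b ∈ Submodule.span ℂ ((Submonoid.closure
      {a : A | ∃ i, 1 ≤ i ∧ i < k ∧ a = X i} : Submonoid A) : Set A) := by
    rw [← Algebra.adjoin_eq_span]
    exact hb
  refine Submodule.span_induction ?_ ?_ ?_ ?_ hb'
  · intro x hx
    obtain ⟨l, hl, rfl⟩ := Submonoid.exists_list_of_mem_closure hx
    obtain ⟨L, hL, hprod⟩ := listrep k X l hl
    rw [← hprod]
    exact hA1 k hk le_rfl L (fun i hi => ⟨(hL i hi).1, le_of_lt (hL i hi).2⟩)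
      (fun i hi => Nat.ne_of_lt (hL i hi).2)
  · simp
  · intro x y _ _ hx hy
    rw [mul_add, map_add, hx, hy, add_zero]
  · intro a x _ hx
    rw [mul_smul_comm, map_smul, hx, smul_zero]

lemma EX0 (hk : 1 ≤ k) (hEtr : ∀ x y : A, E (x * y) = E (y * x))
    (hA1 : ∀ j, 1 ≤ j → j ≤ k →
      ∀ L : List ℕ, (∀ i ∈ L, 1 ≤ i ∧ i ≤ k) → (∀ i ∈ L, i ≠ j) →
      E (X j * (L.map X).prod) = 0) :
    ∀ b₁ ∈ B0 k X, ∀ b₂ ∈ B0 k X, E (b₁ * X k * b₂) = 0 := by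
  intro b₁ hb₁ b₂ hb₂
  rw [hEtr (b₁ * X k) b₂, show b₂ * (b₁ * X k) = b₂ * b₁ * X k from by
    simp [mul_assoc], hEtr (b₂ * b₁) (X k)]
  exact EL1 E k X hk hA1 _ (mul_mem hb₂ hb₁)

lemma EL3 (hk : 1 ≤ k) (hE1 : E 1 = 1)
    (hA3 : ∀ j, 2 ≤ j → j ≤ k →
      ∀ L₁ L₂ : List ℕ, (∀ i ∈ L₁, 1 ≤ i ∧ i < j) → (∀ i ∈ L₂, 1 ≤ i ∧ i < j) →
      E (X j * (L₁.map X).prod * X j * (L₂.map X).prod)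
        = E (X j ^ 2) * E ((L₁.map X).prod) * E ((L₂.map X).prod)) :
    ∀ c ∈ B0 k X, ∀ b ∈ B0 k X,
      E (X k * c * X k * b) = E (X k ^ 2) * E c * E b := by
  intro c hc b hb
  rcases Nat.lt_or_ge k 2 with hk2 | hk2
  · -- k = 1 case: B0 is the scalars
    have hk1 : k = 1 := by omega
    subst hk1
    have hempty : {a : A | ∃ i, 1 ≤ i ∧ i < 1 ∧ a = X i} = (∅ : Set A) := by
      ext a
      simp only [Set.mem_setOf_eq, Set.mem_empty_iff_false, iff_false]
      rintro ⟨i, h1, h2, rfl⟩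
      omega
    have hbot : B0 1 X = ⊥ := by
      rw [B0, hempty, Algebra.adjoin_empty]
    rw [hbot, Algebra.mem_bot] at hc hb
    obtain ⟨r, rfl⟩ := hc
    obtain ⟨t, rfl⟩ := hb
    simp only [Algebra.algebraMap_eq_smul_one, mul_smul_comm, smul_mul_assoc,
      mul_one, map_smul, smul_eq_mul, hE1]
    rw [show X 1 * X 1 = X 1 ^ 2 from (sq (X 1)).symm]
    ring
  · -- k ≥ 2 : use hA3 and a double span induction
    have Hmono : ∀ (Lc : List ℕ), (∀ i ∈ Lc, 1 ≤ i ∧ i < k) → ∀ b' ∈ B0 k X,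
        E (X k * (Lc.map X).prod * X k * b')
          = E (X k ^ 2) * E ((Lc.map X).prod) * E b' := by
      intro Lc hLc b' hb'
      have hb'' : b' ∈ Submodule.span ℂ ((Submonoid.closure
          {a : A | ∃ i, 1 ≤ i ∧ i < k ∧ a = X i} : Submonoid A) : Set A) := by
        rw [← Algebra.adjoin_eq_span]
        exact hb'
      refine Submodule.span_induction ?_ ?_ ?_ ?_ hb''
      · intro x hx
        obtain ⟨l, hl, rfl⟩ := Submonoid.exists_list_of_mem_closure hx
        obtain ⟨L, hL, hprod⟩ := listrep k X l hl
        rw [← hprod]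
        exact hA3 k hk2 le_rfl Lc L hLc hL
      · simp
      · intro x y _ _ hx hy
        rw [mul_add, map_add, map_add, hx, hy]
        ring
      · intro a x _ hx
        rw [mul_smul_comm, map_smul, map_smul, hx, smul_eq_mul, smul_eq_mul]
        ring
    have hc' : c ∈ Submodule.span ℂ ((Submonoid.closure
        {a : A | ∃ i, 1 ≤ i ∧ i < k ∧ a = X i} : Submonoid A) : Set A) := by
      rw [← Algebra.adjoin_eq_span]
      exact hc
    refine Submodule.span_induction (p := fun x _ => ∀ b' ∈ B0 k X,
        E (X k * x * X k * b') = E (X k ^ 2) * E x * E b') ?_ ?_ ?_ ?_ hc' b hb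
    · intro x hx b' hb'
      obtain ⟨l, hl, rfl⟩ := Submonoid.exists_list_of_mem_closure hx
      obtain ⟨L, hL, hprod⟩ := listrep k X l hl
      rw [← hprod]
      exact Hmono L hL b' hb'
    · intro b' hb'
      simp
    · intro x y _ _ hx hy b' hb'
      simp only [mul_add, add_mul, map_add]
      rw [hx b' hb', hy b' hb']
      try ring
    · intro a x _ hx b' hb'
      simp only [mul_smul_comm, smul_mul_assoc, map_smul, smul_eq_mul]
      rw [hx b' hb']
      try ring

lemma EX3 (hk : 1 ≤ k) (hE1 : E 1 = 1)
    (hEtr : ∀ x y : A, E (x * y) = E (y * x))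
    (hA1 : ∀ j, 1 ≤ j → j ≤ k →
      ∀ L : List ℕ, (∀ i ∈ L, 1 ≤ i ∧ i ≤ k) → (∀ i ∈ L, i ≠ j) →
      E (X j * (L.map X).prod) = 0)
    (hA3 : ∀ j, 2 ≤ j → j ≤ k →
      ∀ L₁ L₂ : List ℕ, (∀ i ∈ L₁, 1 ≤ i ∧ i < j) → (∀ i ∈ L₂, 1 ≤ i ∧ i < j) →
      E (X j * (L₁.map X).prod * X j * (L₂.map X).prod)
        = E (X j ^ 2) * E ((L₁.map X).prod) * E ((L₂.map X).prod)) :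
    ∀ b₁ ∈ B0 k X, ∀ c ∈ B0 k X, ∀ b₂ ∈ B0 k X,
      E (b₁ * X k * c * X k * b₂) = E (X k ^ 2) * E c * E (b₂ * b₁) := by
  intro b₁ hb₁ c hc b₂ hb₂
  rw [hEtr (b₁ * X k * c * X k) b₂,
    show b₂ * (b₁ * X k * c * X k) = b₂ * b₁ * (X k * c * X k) from by
      simp [mul_assoc],
    hEtr (b₂ * b₁) (X k * c * X k),
    show X k * c * X k * (b₂ * b₁) = X k * c * X k * (b₂ * b₁) from rfl]
  exact EL3 E k X hk hE1 hA3 c hc _ (mul_mem hb₂ hb₁)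

end CondA

section Helpers

variable (E : A →ₗ[ℂ] ℂ) (N k : ℕ) (X Y : ℕ → A)

lemma wp_split_center (q : Option ℕ × A) (w₁ w₂ : List (Option ℕ × A)) :
    wp (w₁ ++ q :: w₂)
      = wp (w₁ ++ (q.1, q.2 - E q.2 • 1) :: w₂) + E q.2 • wp (w₁ ++ w₂) := by
  have h : (q.2 - E q.2 • (1 : A)) * wp w₂ = q.2 * wp w₂ - E q.2 • wp w₂ := by
    rw [sub_mul, smul_mul_assoc, one_mul]
  rw [wp_append, wp_append, wp_append, wp_cons, wp_cons]
  simp only [h]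
  rw [mul_sub, mul_smul_comm, sub_add_cancel]

lemma wp_merge (q q' : Option ℕ × A) (w₁ w₂ : List (Option ℕ × A)) :
    wp (w₁ ++ q :: q' :: w₂) = wp (w₁ ++ (q.1, q.2 * q'.2) :: w₂) := by
  simp [wp_append, mul_assoc]

lemma head_tag_ne {t : List (Option ℕ × A)} {τ : Option ℕ}
    (h : ∀ y ∈ (t.map Prod.fst).head?, τ ≠ y) : ∀ y ∈ t.head?, τ ≠ y.1 := by
  intro y hy
  apply h
  rw [List.head?_map, hy]
  rfl

lemma last_tag_ne {t : List (Option ℕ × A)} {τ : Option ℕ}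
    (h : ∀ x ∈ (t.map Prod.fst).getLast?, x ≠ τ) : ∀ y ∈ t.getLast?, y.1 ≠ τ := by
  intro y hy
  apply h
  rw [List.getLast?_map, hy]
  rfl

lemma okL_tag_ne_some_k {q : Option ℕ × A} (h : okL N k X Y q) : some k ≠ q.1 := by
  rcases h with ⟨h1, _⟩ | ⟨j, h1, h2, _, _, _⟩
  · rw [h1]; simp
  · rw [h1]
    intro hc
    have := Option.some.inj hc
    omega

end Helpers

section Main

variable (E : A →ₗ[ℂ] ℂ) (N k : ℕ) (X Y : ℕ → A)

/-- the freeness hypothesis -/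
def FreeHyp (E : A →ₗ[ℂ] ℂ) (N k : ℕ) (X Y : ℕ → A) : Prop :=
  ∀ L : List (Option ℕ × A), L ≠ [] →
    (L.map Prod.fst).Chain' (· ≠ ·) →
    (∀ q ∈ L,
      (q.1 = none ∧ q.2 ∈ Algebra.adjoin ℂ {a : A | ∃ i, 1 ≤ i ∧ i ≤ k ∧ a = X i}) ∨
      (∃ j, q.1 = some j ∧ k ≤ j ∧ j ≤ N ∧
        ∃ p : Polynomial ℂ, q.2 = Polynomial.aeval (Y j) p)) →
    (∀ q ∈ L, E q.2 = 0) →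
    E ((L.map Prod.snd).prod) = 0

lemma Ecen (hE1 : E 1 = 1) (x : A) : E (x - E x • 1) = 0 := by
  rw [map_sub, map_smul, hE1, smul_eq_mul, mul_one, sub_self]

/-- a fully reduced word (nonempty, head not a `B`-letter) is orthogonal to `B` -/
lemma F0 (hfree : FreeHyp E N k X Y) (hE1 : E 1 = 1)
    (t : List (Option ℕ × A)) (hne : t ≠ [])
    (hval : ∀ q ∈ t, okL N k X Y q)
    (hch : (t.map Prod.fst).Chain' (· ≠ ·))
    (hcen : ∀ q ∈ t, E q.2 = 0)
    (hhead : ∀ y ∈ t.head?, y.1 ≠ none) :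
    ∀ b ∈ Bfull k X, E (b * wp t) = 0 := by
  intro b hb
  have h1 : E ((b - E b • 1) * wp t) = 0 := by
    refine free1 E N k X Y hfree (none, b - E b • 1)
      (Or.inl ⟨rfl, sub_mem hb (Subalgebra.smul_mem _ (one_mem _) _)⟩)
      (Ecen E hE1 b) t hval hch hcen ?_
    intro y hy
    exact (hhead y hy).symm
  have h2 : E (wp t) = 0 := free0 E N k X Y hfree t hne hval hch hcen
  have h3 : E (b * wp t) = E ((b - E b • 1) * wp t) + E b * E (wp t) := by
    rw [sub_mul, smul_mul_assoc, one_mul, map_sub, map_smul, smul_eq_mul]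
    ring
  rw [h3, h1, h2]
  ring

lemma F0tr (hfree : FreeHyp E N k X Y) (hE1 : E 1 = 1)
    (hEtr : ∀ x y : A, E (x * y) = E (y * x))
    (t : List (Option ℕ × A)) (hne : t ≠ [])
    (hval : ∀ q ∈ t, okL N k X Y q)
    (hch : (t.map Prod.fst).Chain' (· ≠ ·))
    (hcen : ∀ q ∈ t, E q.2 = 0)
    (hhead : ∀ y ∈ t.head?, y.1 ≠ none) :
    ∀ b₁ ∈ Bfull k X, ∀ b₂ ∈ Bfull k X, E (b₂ * wp t * b₁) = 0 := by
  intro b₁ hb₁ b₂ hb₂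
  rw [hEtr (b₂ * wp t) b₁, show b₁ * (b₂ * wp t) = b₁ * b₂ * wp t from by
    simp [mul_assoc]]
  exact F0 E N k X Y hfree hE1 t hne hval hch hcen hhead _ (mul_mem hb₁ hb₂)

lemma XinB (hk : 1 ≤ k) : X k ∈ Bfull k X :=
  Algebra.subset_adjoin ⟨k, hk, le_rfl, rfl⟩

/-- first order, `X` side -/
lemma M1X (hfree : FreeHyp E N k X Y) (hE1 : E 1 = 1)
    (hEtr : ∀ x y : A, E (x * y) = E (y * x)) (hk : 1 ≤ k)
    (hA1 : ∀ j, 1 ≤ j → j ≤ k →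
      ∀ L : List ℕ, (∀ i ∈ L, 1 ≤ i ∧ i ≤ k) → (∀ i ∈ L, i ≠ j) →
      E (X j * (L.map X).prod) = 0) :
    ∀ w, (∀ q ∈ w, okL N k X Y q) → ∀ b₁ ∈ B0 k X, ∀ b₂ ∈ B0 k X,
      E (b₁ * X k * b₂ * wp w) = 0 := by
  have main := reduce2 E hE1 N k X Y
    (fun _ w => ∀ b₁ ∈ B0 k X, ∀ b₂ ∈ B0 k X, E (b₁ * X k * b₂ * wp w) = 0)
    (fun v₁ q v₂ w _ h _ => h) ?_ (fun v₁ q q' v₂ w _ h => h) ?_ ?_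
  · intro w hw
    exact main [] w (by simp) hw
  · -- split in w
    intro v w₁ q w₂ hq hc ho b₁ hb₁ b₂ hb₂
    rw [wp_split_center E q w₁ w₂, mul_add, map_add, mul_smul_comm, map_smul,
      smul_eq_mul, hc b₁ hb₁ b₂ hb₂, ho b₁ hb₁ b₂ hb₂]
    ring
  · -- merge in w
    intro v w₁ q q' w₂ _ h b₁ hb₁ b₂ hb₂
    rw [wp_merge]
    exact h b₁ hb₁ b₂ hb₂
  · -- base case
    intro v w _ hw _ hcw _ hc0w b₁ hb₁ b₂ hb₂
    have hs0 : ∀ b₁' ∈ B0 k X, ∀ b₂' ∈ B0 k X, E (b₁' * X k * b₂') = 0 :=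
      EX0 E k X hk hEtr hA1
    have hmem : ∀ b₁' ∈ B0 k X, ∀ b₂' ∈ B0 k X,
        MEM N k X Y ((none, b₁' * X k * b₂') : Option ℕ × A) := by
      intro b₁' hb₁' b₂' hb₂'
      exact Or.inl ⟨rfl, mul_mem (mul_mem (B0_le_Bfull k X hb₁') (XinB k X hk))
        (B0_le_Bfull k X hb₂')⟩
    rcases w with _ | ⟨a, w'⟩
    · rw [wp_nil, mul_one]
      exact hs0 b₁ hb₁ b₂ hb₂
    · have hcw' := List.isChain_cons.1 (by rwa [List.map_cons] at hcw)
      rcases hw a (by simp) with ⟨ha1, ha2⟩ | ⟨j, ha1, _, _, _, _⟩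
      · -- absorb the head into b₂
        rw [wp_cons, show b₁ * X k * b₂ * (a.2 * wp w') =
          b₁ * X k * (b₂ * a.2) * wp w' from by simp [mul_assoc]]
        refine free1 E N k X Y hfree (none, b₁ * X k * (b₂ * a.2))
          (hmem b₁ hb₁ _ (mul_mem hb₂ ha2)) (hs0 b₁ hb₁ _ (mul_mem hb₂ ha2))
          w' (fun r hr => hw r (by simp [hr])) hcw'.2
          (fun r hr => hc0w r (by simp [hr])) ?_
        intro y hy
        have := head_tag_ne hcw'.1 y hy
        rw [ha1] at this
        exact this
      · -- head is a `Y`-letter, no absorption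
        refine free1 E N k X Y hfree (none, b₁ * X k * b₂)
          (hmem b₁ hb₁ b₂ hb₂) (hs0 b₁ hb₁ b₂ hb₂)
          (a :: w') hw hcw hc0w ?_
        intro y hy
        simp only [List.head?_cons, Option.mem_def, Option.some.injEq] at hy
        subst hy
        rw [ha1]
        simp

/-- first order, `Y` side -/
lemma M1Y (hfree : FreeHyp E N k X Y) (hE1 : E 1 = 1) (hkN : k ≤ N)
    (hYk : E (Y k) = 0) :
    ∀ w, (∀ q ∈ w, okL N k X Y q) → E (Y k * wp w) = 0 := by
  have main := reduce2 E hE1 N k X Y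
    (fun _ w => E (Y k * wp w) = 0)
    (fun v₁ q v₂ w _ h _ => h) ?_ (fun v₁ q q' v₂ w _ h => h) ?_ ?_
  · intro w hw
    exact main [] w (by simp) hw
  · intro v w₁ q w₂ hq hc ho
    rw [wp_split_center E q w₁ w₂, mul_add, map_add, mul_smul_comm, map_smul,
      smul_eq_mul, hc, ho]
    ring
  · intro v w₁ q q' w₂ _ h
    rw [wp_merge]
    exact h
  · intro v w _ hw _ hcw _ hc0w
    refine free1 E N k X Y hfree (some k, Y k)
      (Or.inr ⟨k, rfl, le_rfl, hkN, Polynomial.X, by simp⟩) hYk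
      w hw hcw hc0w ?_
    intro y hy
    exact okL_tag_ne_some_k N k X Y (hw y (List.mem_of_mem_head? hy))

/-- second order, collapsed shape, `X` side -/
lemma M2BX (hfree : FreeHyp E N k X Y) (hE1 : E 1 = 1)
    (hEtr : ∀ x y : A, E (x * y) = E (y * x)) (hk : 1 ≤ k)
    (hA1 : ∀ j, 1 ≤ j → j ≤ k →
      ∀ L : List ℕ, (∀ i ∈ L, 1 ≤ i ∧ i ≤ k) → (∀ i ∈ L, i ≠ j) →
      E (X j * (L.map X).prod) = 0)
    (hA3 : ∀ j, 2 ≤ j → j ≤ k →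
      ∀ L₁ L₂ : List ℕ, (∀ i ∈ L₁, 1 ≤ i ∧ i < j) → (∀ i ∈ L₂, 1 ≤ i ∧ i < j) →
      E (X j * (L₁.map X).prod * X j * (L₂.map X).prod)
        = E (X j ^ 2) * E ((L₁.map X).prod) * E ((L₂.map X).prod)) :
    ∀ w, (∀ q ∈ w, okL N k X Y q) →
      ∀ b₁ ∈ B0 k X, ∀ c ∈ B0 k X, ∀ b₂ ∈ B0 k X,
      E (b₁ * X k * c * X k * b₂ * wp w)
        = E (X k ^ 2) * E c * E (b₂ * wp w * b₁) := by
  have main := reduce2 E hE1 N k X Y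
    (fun _ w => ∀ b₁ ∈ B0 k X, ∀ c ∈ B0 k X, ∀ b₂ ∈ B0 k X,
      E (b₁ * X k * c * X k * b₂ * wp w)
        = E (X k ^ 2) * E c * E (b₂ * wp w * b₁))
    (fun v₁ q v₂ w _ h _ => h) ?_ (fun v₁ q q' v₂ w _ h => h) ?_ ?_
  · intro w hw
    exact main [] w (by simp) hw
  · -- split in w
    intro v w₁ q w₂ hq hcent homit b₁ hb₁ c hc b₂ hb₂
    rw [wp_split_center E q w₁ w₂]
    simp only [mul_add, add_mul, mul_smul_comm, smul_mul_assoc, map_add,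
      map_smul, smul_eq_mul]
    rw [hcent b₁ hb₁ c hc b₂ hb₂, homit b₁ hb₁ c hc b₂ hb₂]
    ring
  · -- merge in w
    intro v w₁ q q' w₂ _ h b₁ hb₁ c hc b₂ hb₂
    rw [wp_merge]
    exact h b₁ hb₁ c hc b₂ hb₂
  · -- base case
    intro v w _ hw _ hcw _ hc0w b₁ hb₁ c hc b₂ hb₂
    have core : ∀ w₀, (∀ q ∈ w₀, okL N k X Y q) →
        ((w₀.map Prod.fst).Chain' (· ≠ ·)) → (∀ q ∈ w₀, E q.2 = 0) →
        (∀ y ∈ w₀.head?, y.1 ≠ none) → ∀ b₂' ∈ B0 k X,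
        E (b₁ * X k * c * X k * b₂' * wp w₀)
          = E (X k ^ 2) * E c * E (b₂' * wp w₀ * b₁) := by
      intro w₀ hval hch hcen hhead b₂' hb₂'
      rcases w₀ with _ | ⟨a, w'⟩
      · simp only [wp_nil, mul_one]
        exact EX3 E k X hk hE1 hEtr hA1 hA3 b₁ hb₁ c hc b₂' hb₂'
      · have hmemd : (b₁ * X k * c * X k * b₂') ∈ Bfull k X :=
          mul_mem (mul_mem (mul_mem (mul_mem (B0_le_Bfull k X hb₁)
            (XinB k X hk)) (B0_le_Bfull k X hc)) (XinB k X hk))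
            (B0_le_Bfull k X hb₂')
        have h1 : E ((b₁ * X k * c * X k * b₂'
            - E (b₁ * X k * c * X k * b₂') • 1) * wp (a :: w')) = 0 :=
          free1 E N k X Y hfree (none, _)
            (Or.inl ⟨rfl, sub_mem hmemd (Subalgebra.smul_mem _ (one_mem _) _)⟩)
            (Ecen E hE1 _) (a :: w') hval hch hcen
            (fun y hy => (hhead y hy).symm)
        have h2 : E (wp (a :: w')) = 0 :=
          free0 E N k X Y hfree (a :: w') (by simp) hval hch hcen
        have h3 : E (b₁ * X k * c * X k * b₂' * wp (a :: w'))
            = E ((b₁ * X k * c * X k * b₂'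
                - E (b₁ * X k * c * X k * b₂') • 1) * wp (a :: w'))
              + E (b₁ * X k * c * X k * b₂') * E (wp (a :: w')) := by
          rw [sub_mul, smul_mul_assoc, one_mul, map_sub, map_smul, smul_eq_mul]
          ring
        have h4 : E (b₂' * wp (a :: w') * b₁) = 0 :=
          F0tr E N k X Y hfree hE1 hEtr (a :: w') (by simp) hval hch hcen hhead
            b₁ (B0_le_Bfull k X hb₁) b₂' (B0_le_Bfull k X hb₂')
        rw [h3, h1, h2, h4]
        ring
    rcases w with _ | ⟨a, w'⟩
    · exact core [] (by simp) (by simp [List.Chain']) (by simp) (by simp) b₂ hb₂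
    · have hcw' := List.isChain_cons.1 (by rwa [List.map_cons] at hcw)
      rcases hw a (by simp) with ⟨ha1, ha2⟩ | ⟨j, ha1, _, _, _, _⟩
      · -- absorb the head into b₂
        have e1 : b₁ * X k * c * X k * b₂ * wp (a :: w')
            = b₁ * X k * c * X k * (b₂ * a.2) * wp w' := by
          rw [wp_cons]; simp [mul_assoc]
        have e2 : b₂ * wp (a :: w') * b₁ = b₂ * a.2 * wp w' * b₁ := by
          rw [wp_cons]; simp [mul_assoc]
        rw [e1, e2]
        refine core w' (fun r hr => hw r (by simp [hr])) hcw'.2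
          (fun r hr => hc0w r (by simp [hr])) ?_ _ (mul_mem hb₂ ha2)
        intro y hy
        have hne := head_tag_ne hcw'.1 y hy
        rw [ha1] at hne
        exact hne.symm
      · refine core (a :: w') hw hcw hc0w ?_ b₂ hb₂
        intro y hy
        simp only [List.head?_cons, Option.mem_def, Option.some.injEq] at hy
        subst hy
        rw [ha1]
        simp

/-- second order, two separated occurrences, `X` side -/
lemma M2AX (hfree : FreeHyp E N k X Y) (hE1 : E 1 = 1)
    (hEtr : ∀ x y : A, E (x * y) = E (y * x)) (hk : 1 ≤ k)
    (hA1 : ∀ j, 1 ≤ j → j ≤ k →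
      ∀ L : List ℕ, (∀ i ∈ L, 1 ≤ i ∧ i ≤ k) → (∀ i ∈ L, i ≠ j) →
      E (X j * (L.map X).prod) = 0)
    (hA3 : ∀ j, 2 ≤ j → j ≤ k →
      ∀ L₁ L₂ : List ℕ, (∀ i ∈ L₁, 1 ≤ i ∧ i < j) → (∀ i ∈ L₂, 1 ≤ i ∧ i < j) →
      E (X j * (L₁.map X).prod * X j * (L₂.map X).prod)
        = E (X j ^ 2) * E ((L₁.map X).prod) * E ((L₂.map X).prod)) :
    ∀ v w, (∀ q ∈ v, okL N k X Y q) → (∀ q ∈ w, okL N k X Y q) →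
      ∀ b₁ ∈ B0 k X, ∀ b₂ ∈ B0 k X, ∀ b₃ ∈ B0 k X, ∀ b₄ ∈ B0 k X,
      E (b₁ * X k * b₂ * wp v * (b₃ * X k * b₄) * wp w)
        = E (X k ^ 2) * E (b₂ * wp v * b₃) * E (b₄ * wp w * b₁) := by
  have MB := M2BX E N k X Y hfree hE1 hEtr hk hA1 hA3
  have hs0 := EX0 E k X hk hEtr hA1
  have hmem : ∀ u₁ ∈ B0 k X, ∀ u₂ ∈ B0 k X,
      MEM N k X Y ((none, u₁ * X k * u₂) : Option ℕ × A) := by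
    intro u₁ hu₁ u₂ hu₂
    exact Or.inl ⟨rfl, mul_mem (mul_mem (B0_le_Bfull k X hu₁) (XinB k X hk))
      (B0_le_Bfull k X hu₂)⟩
  have main := reduce2 E hE1 N k X Y
    (fun v w => ∀ b₁ ∈ B0 k X, ∀ b₂ ∈ B0 k X, ∀ b₃ ∈ B0 k X, ∀ b₄ ∈ B0 k X,
      E (b₁ * X k * b₂ * wp v * (b₃ * X k * b₄) * wp w)
        = E (X k ^ 2) * E (b₂ * wp v * b₃) * E (b₄ * wp w * b₁))
    ?_ ?_ ?_ ?_ ?_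
  · exact fun v w hv hw => main v w hv hw
  · -- split in v
    intro v₁ q v₂ w hq hcent homit b₁ hb₁ b₂ hb₂ b₃ hb₃ b₄ hb₄
    rw [wp_split_center E q v₁ v₂]
    simp only [mul_add, add_mul, mul_smul_comm, smul_mul_assoc, map_add,
      map_smul, smul_eq_mul]
    rw [hcent b₁ hb₁ b₂ hb₂ b₃ hb₃ b₄ hb₄, homit b₁ hb₁ b₂ hb₂ b₃ hb₃ b₄ hb₄]
    ring
  · -- split in w
    intro v w₁ q w₂ hq hcent homit b₁ hb₁ b₂ hb₂ b₃ hb₃ b₄ hb₄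
    rw [wp_split_center E q w₁ w₂]
    simp only [mul_add, add_mul, mul_smul_comm, smul_mul_assoc, map_add,
      map_smul, smul_eq_mul]
    rw [hcent b₁ hb₁ b₂ hb₂ b₃ hb₃ b₄ hb₄, homit b₁ hb₁ b₂ hb₂ b₃ hb₃ b₄ hb₄]
    ring
  · -- merge in v
    intro v₁ q q' v₂ w _ h b₁ hb₁ b₂ hb₂ b₃ hb₃ b₄ hb₄
    rw [wp_merge]
    exact h b₁ hb₁ b₂ hb₂ b₃ hb₃ b₄ hb₄
  · -- merge in w
    intro v w₁ q q' w₂ _ h b₁ hb₁ b₂ hb₂ b₃ hb₃ b₄ hb₄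
    rw [wp_merge]
    exact h b₁ hb₁ b₂ hb₂ b₃ hb₃ b₄ hb₄
  · -- base case
    intro v w hv hw hcv hcw hc0v hc0w b₁ hb₁ b₂ hb₂ b₃ hb₃ b₄ hb₄
    -- fully clean situation
    have coreW : ∀ v₀, v₀ ≠ [] → (∀ q ∈ v₀, okL N k X Y q) →
        ((v₀.map Prod.fst).Chain' (· ≠ ·)) → (∀ q ∈ v₀, E q.2 = 0) →
        (∀ y ∈ v₀.head?, y.1 ≠ none) → (∀ y ∈ v₀.getLast?, y.1 ≠ none) →
        ∀ w₀, (∀ q ∈ w₀, okL N k X Y q) →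
        ((w₀.map Prod.fst).Chain' (· ≠ ·)) → (∀ q ∈ w₀, E q.2 = 0) →
        (∀ y ∈ w₀.head?, y.1 ≠ none) →
        ∀ b₂' ∈ B0 k X, ∀ b₃' ∈ B0 k X, ∀ b₄' ∈ B0 k X,
        E (b₁ * X k * b₂' * wp v₀ * (b₃' * X k * b₄') * wp w₀)
          = E (X k ^ 2) * E (b₂' * wp v₀ * b₃') * E (b₄' * wp w₀ * b₁) := by
      intro v₀ hne hval hch hcen hhead hlast w₀ hwval hwch hwcen hwhead
        b₂' hb₂' b₃' hb₃' b₄' hb₄'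
      have hM : E (b₂' * wp v₀ * b₃') = 0 :=
        F0tr E N k X Y hfree hE1 hEtr v₀ hne hval hch hcen hhead
          b₃' (B0_le_Bfull k X hb₃') b₂' (B0_le_Bfull k X hb₂')
      rw [hM, mul_zero, zero_mul]
      rw [show b₁ * X k * b₂' * wp v₀ * (b₃' * X k * b₄') * wp w₀
        = b₁ * X k * b₂' * wp v₀ * ((b₃' * X k * b₄') * wp w₀) from by
          simp [mul_assoc]]
      exact free2 E N k X Y hfree (none, b₁ * X k * b₂') (none, b₃' * X k * b₄')
        (hmem b₁ hb₁ b₂' hb₂') (hmem b₃' hb₃' b₄' hb₄')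
        (hs0 b₁ hb₁ b₂' hb₂') (hs0 b₃' hb₃' b₄' hb₄')
        v₀ w₀ hne hval hwval hch hwch hcen hwcen
        (fun y hy => (hhead y hy).symm) hlast (fun y hy => (hwhead y hy).symm)
    -- absorb the head of `w`
    have coreVW : ∀ v₀, v₀ ≠ [] → (∀ q ∈ v₀, okL N k X Y q) →
        ((v₀.map Prod.fst).Chain' (· ≠ ·)) → (∀ q ∈ v₀, E q.2 = 0) →
        (∀ y ∈ v₀.head?, y.1 ≠ none) → (∀ y ∈ v₀.getLast?, y.1 ≠ none) →
        ∀ b₂' ∈ B0 k X, ∀ b₃' ∈ B0 k X,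
        E (b₁ * X k * b₂' * wp v₀ * (b₃' * X k * b₄) * wp w)
          = E (X k ^ 2) * E (b₂' * wp v₀ * b₃') * E (b₄ * wp w * b₁) := by
      intro v₀ hne hval hch hcen hhead hlast b₂' hb₂' b₃' hb₃'
      rcases w with _ | ⟨a, w'⟩
      · exact coreW v₀ hne hval hch hcen hhead hlast [] (by simp) (by simp [List.Chain'])
          (by simp) (by simp) b₂' hb₂' b₃' hb₃' b₄ hb₄
      · have hcw' := List.isChain_cons.1 (by rwa [List.map_cons] at hcw)
        rcases hw a (by simp) with ⟨ha1, ha2⟩ | ⟨j, ha1, _, _, _, _⟩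
        · have e1 : b₁ * X k * b₂' * wp v₀ * (b₃' * X k * b₄) * wp (a :: w')
              = b₁ * X k * b₂' * wp v₀ * (b₃' * X k * (b₄ * a.2)) * wp w' := by
            rw [wp_cons]; simp [mul_assoc]
          have e2 : b₄ * wp (a :: w') * b₁ = b₄ * a.2 * wp w' * b₁ := by
            rw [wp_cons]; simp [mul_assoc]
          rw [e1, e2]
          refine coreW v₀ hne hval hch hcen hhead hlast w'
            (fun r hr => hw r (by simp [hr])) hcw'.2
            (fun r hr => hc0w r (by simp [hr])) ?_
            b₂' hb₂' b₃' hb₃' _ (mul_mem hb₄ ha2)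
          intro y hy
          have hne' := head_tag_ne hcw'.1 y hy
          rw [ha1] at hne'
          exact hne'.symm
        · refine coreW v₀ hne hval hch hcen hhead hlast (a :: w') hw hcw hc0w
            ?_ b₂' hb₂' b₃' hb₃' b₄ hb₄
          intro y hy
          simp only [List.head?_cons, Option.mem_def, Option.some.injEq] at hy
          subst hy
          rw [ha1]
          simp
    -- absorb the last letter of the middle word
    have coreV : ∀ v₀, v₀ ≠ [] → (∀ q ∈ v₀, okL N k X Y q) →
        ((v₀.map Prod.fst).Chain' (· ≠ ·)) → (∀ q ∈ v₀, E q.2 = 0) →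
        (∀ y ∈ v₀.head?, y.1 ≠ none) →
        ∀ b₂' ∈ B0 k X,
        E (b₁ * X k * b₂' * wp v₀ * (b₃ * X k * b₄) * wp w)
          = E (X k ^ 2) * E (b₂' * wp v₀ * b₃) * E (b₄ * wp w * b₁) := by
      intro v₀ hne hval hch hcen hhead b₂' hb₂'
      rcases List.eq_nil_or_concat v₀ with rfl | ⟨v₁, r, rfl⟩
      · exact absurd rfl hne
      rcases hval r (by simp [List.concat_eq_append]) with ⟨hr1, hr2⟩ |
        ⟨j, hr1, _, _, _, _⟩
      · -- last letter is a `B`-letter, absorb into b₃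
        have hv₁ne : v₁ ≠ [] := by
          rintro rfl
          exact hhead r (by simp [List.concat_eq_append]) hr1
        have hchsplit := List.isChain_append.1
          (by rwa [List.concat_eq_append, List.map_append] at hch)
        have e1 : b₁ * X k * b₂' * wp (v₁.concat r) * (b₃ * X k * b₄) * wp w
            = b₁ * X k * b₂' * wp v₁ * ((r.2 * b₃) * X k * b₄) * wp w := by
          rw [List.concat_eq_append]; simp [mul_assoc]
        have e2 : b₂' * wp (v₁.concat r) * b₃ = b₂' * wp v₁ * (r.2 * b₃) := by
          rw [List.concat_eq_append]; simp [mul_assoc]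
        rw [e1, e2]
        refine coreVW v₁ hv₁ne (fun x hx => hval x (by
            rw [List.concat_eq_append]; exact List.mem_append_left _ hx))
          hchsplit.1 (fun x hx => hcen x (by
            rw [List.concat_eq_append]; exact List.mem_append_left _ hx)) ?_ ?_
          b₂' hb₂' _ (mul_mem hr2 hb₃)
        · intro y hy
          refine hhead y ?_
          rw [List.concat_eq_append, List.head?_append_of_ne_nil _ hv₁ne]
          exact hy
        · intro y hy
          have hx : y.1 ∈ (v₁.map Prod.fst).getLast? := by
            rw [List.getLast?_map, hy]; rfl
          have hne2 := hchsplit.2.2 y.1 hx r.1 (by simp)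
          rw [hr1] at hne2
          exact hne2
      · -- last letter is a `Y`-letter, no absorption needed
        refine coreVW (v₁.concat r) hne hval hch hcen hhead ?_ b₂' hb₂' b₃ hb₃
        intro y hy
        rw [List.concat_eq_append, List.getLast?_concat] at hy
        simp only [Option.mem_def, Option.some.injEq] at hy
        subst hy
        rw [hr1]
        simp
    -- now absorb the head of `v` (or collapse to the B-shape)
    rcases v with _ | ⟨a, v'⟩
    · simp only [wp_nil, mul_one]
      rw [show b₁ * X k * b₂ * (b₃ * X k * b₄) * wp w
          = b₁ * X k * (b₂ * b₃) * X k * b₄ * wp w from by simp [mul_assoc]]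
      exact MB w hw b₁ hb₁ _ (mul_mem hb₂ hb₃) b₄ hb₄
    · have hcv' := List.isChain_cons.1 (by rwa [List.map_cons] at hcv)
      rcases hv a (by simp) with ⟨ha1, ha2⟩ | ⟨j, ha1, _, _, _, _⟩
      · rcases v' with _ | ⟨a2, v''⟩
        · -- v = [a] : collapse to the B-shape
          simp only [wp_cons, wp_nil, mul_one]
          rw [show b₁ * X k * b₂ * a.2 * (b₃ * X k * b₄) * wp w
              = b₁ * X k * (b₂ * a.2 * b₃) * X k * b₄ * wp w from by
            simp [mul_assoc]]
          exact MB w hw b₁ hb₁ _ (mul_mem (mul_mem hb₂ ha2) hb₃) b₄ hb₄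
        · -- absorb head into b₂
          have e1 : b₁ * X k * b₂ * wp (a :: a2 :: v'') * (b₃ * X k * b₄) * wp w
              = b₁ * X k * (b₂ * a.2) * wp (a2 :: v'') * (b₃ * X k * b₄)
                * wp w := by
            simp [mul_assoc]
          have e2 : b₂ * wp (a :: a2 :: v'') * b₃
              = b₂ * a.2 * wp (a2 :: v'') * b₃ := by
            simp [mul_assoc]
          rw [e1, e2]
          refine coreV (a2 :: v'') (by simp) (fun r hr => hv r (by simp [hr]))
            hcv'.2 (fun r hr => hc0v r (by simp [hr])) ?_ _ (mul_mem hb₂ ha2)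
          intro y hy
          have hne3 := head_tag_ne hcv'.1 y hy
          rw [ha1] at hne3
          exact hne3.symm
      · -- head of `v` is a `Y`-letter
        refine coreV (a :: v') (by simp) hv hcv hc0v ?_ b₂ hb₂
        intro y hy
        simp only [List.head?_cons, Option.mem_def, Option.some.injEq] at hy
        subst hy
        rw [ha1]
        simp

/-- second order, collapsed shape, `Y` side -/
lemma M2BY (hfree : FreeHyp E N k X Y) (hE1 : E 1 = 1) (hkN : k ≤ N) :
    ∀ w, (∀ q ∈ w, okL N k X Y q) →
      E (Y k * Y k * wp w) = E (Y k ^ 2) * E (wp w) := by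
  have main := reduce2 E hE1 N k X Y
    (fun _ w => E (Y k * Y k * wp w) = E (Y k ^ 2) * E (wp w))
    (fun v₁ q v₂ w _ h _ => h) ?_ (fun v₁ q q' v₂ w _ h => h) ?_ ?_
  · intro w hw
    exact main [] w (by simp) hw
  · intro v w₁ q w₂ hq hcent homit
    rw [wp_split_center E q w₁ w₂]
    simp only [mul_add, add_mul, mul_smul_comm, smul_mul_assoc, map_add,
      map_smul, smul_eq_mul]
    rw [hcent, homit]
    ring
  · intro v w₁ q q' w₂ _ h
    rw [wp_merge]
    exact h
  · intro v w _ hw _ hcw _ hc0w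
    have hpoly : Polynomial.aeval (Y k)
        (Polynomial.X ^ 2 - Polynomial.C (E (Y k * Y k)))
        = Y k * Y k - E (Y k * Y k) • 1 := by
      rw [map_sub, map_pow, Polynomial.aeval_X, Polynomial.aeval_C,
        Algebra.algebraMap_eq_smul_one, sq]
    have h1 : E ((Y k * Y k - E (Y k * Y k) • 1) * wp w) = 0 := by
      refine free1 E N k X Y hfree (some k, Y k * Y k - E (Y k * Y k) • 1)
        (Or.inr ⟨k, rfl, le_rfl, hkN, _, hpoly.symm⟩) (Ecen E hE1 _)
        w hw hcw hc0w ?_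
      intro y hy
      exact okL_tag_ne_some_k N k X Y (hw y (List.mem_of_mem_head? hy))
    have h3 : E (Y k * Y k * wp w)
        = E ((Y k * Y k - E (Y k * Y k) • 1) * wp w)
          + E (Y k * Y k) * E (wp w) := by
      rw [sub_mul, smul_mul_assoc, one_mul, map_sub, map_smul, smul_eq_mul]
      ring
    rw [h3, h1, zero_add, sq]

/-- second order, two separated occurrences, `Y` side -/
lemma M2AY (hfree : FreeHyp E N k X Y) (hE1 : E 1 = 1) (hkN : k ≤ N)
    (hYk : E (Y k) = 0) :
    ∀ v w, (∀ q ∈ v, okL N k X Y q) → (∀ q ∈ w, okL N k X Y q) →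
      E (Y k * wp v * (Y k * wp w)) = E (Y k ^ 2) * E (wp v) * E (wp w) := by
  have MBY := M2BY E N k X Y hfree hE1 hkN
  have hmemy : MEM N k X Y ((some k, Y k) : Option ℕ × A) :=
    Or.inr ⟨k, rfl, le_rfl, hkN, Polynomial.X, by simp⟩
  have main := reduce2 E hE1 N k X Y
    (fun v w => E (Y k * wp v * (Y k * wp w)) = E (Y k ^ 2) * E (wp v) * E (wp w))
    ?_ ?_ ?_ ?_ ?_
  · exact fun v w hv hw => main v w hv hw
  · intro v₁ q v₂ w hq hcent homit
    rw [wp_split_center E q v₁ v₂]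
    simp only [mul_add, add_mul, mul_smul_comm, smul_mul_assoc, map_add,
      map_smul, smul_eq_mul]
    rw [hcent, homit]
    ring
  · intro v w₁ q w₂ hq hcent homit
    rw [wp_split_center E q w₁ w₂]
    simp only [mul_add, add_mul, mul_smul_comm, smul_mul_assoc, map_add,
      map_smul, smul_eq_mul]
    rw [hcent, homit]
    ring
  · intro v₁ q q' v₂ w _ h
    rw [wp_merge]
    exact h
  · intro v w₁ q q' w₂ _ h
    rw [wp_merge]
    exact h
  · intro v w hv hw hcv hcw hc0v hc0w
    rcases v with _ | ⟨a, v'⟩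
    · rw [wp_nil, mul_one, show Y k * (Y k * wp w) = Y k * Y k * wp w from by
        simp [mul_assoc], MBY w hw, hE1]
      ring
    · have hvp : E (wp (a :: v')) = 0 :=
        free0 E N k X Y hfree (a :: v') (by simp) hv hcv hc0v
      rw [hvp, mul_zero, zero_mul]
      exact free2 E N k X Y hfree (some k, Y k) (some k, Y k) hmemy hmemy
        hYk hYk (a :: v') w (by simp) hv hw hcv hcw hc0v hc0w
        (fun y hy => okL_tag_ne_some_k N k X Y (hv y (List.mem_of_mem_head? hy)))
        (fun y hy => (okL_tag_ne_some_k N k X Y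
          (hv y (List.mem_of_mem_getLast? hy))).symm)
        (fun y hy => okL_tag_ne_some_k N k X Y (hw y (List.mem_of_mem_head? hy)))

end Main

section Assemble

variable (N k : ℕ) (X Y : ℕ → A)

/-- generators of the algebra containing `Z` -/
def Cgen (N k : ℕ) (X Y : ℕ → A) : Set A :=
  {a | (∃ i, 1 ≤ i ∧ i < k ∧ a = X i) ∨ (∃ j, k + 1 ≤ j ∧ j ≤ N ∧ a = Y j)}

lemma gen_word (l : List A) (hl : ∀ y ∈ l, y ∈ Cgen N k X Y) :
    ∃ t : List (Option ℕ × A), (∀ q ∈ t, okL N k X Y q) ∧ wp t = l.prod := by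
  induction l with
  | nil => exact ⟨[], by simp, by simp⟩
  | cons a l ih =>
    obtain ⟨t, ht, hw⟩ := ih (fun y hy => hl y (by simp [hy]))
    rcases hl a (by simp) with ⟨i, h1, h2, rfl⟩ | ⟨j, h1, h2, rfl⟩
    · refine ⟨(none, X i) :: t, ?_, by simp [hw]⟩
      intro q hq
      rcases List.mem_cons.1 hq with h | h
      · subst h
        exact Or.inl ⟨rfl, Algebra.subset_adjoin ⟨i, h1, h2, rfl⟩⟩
      · exact ht q h
    · refine ⟨(some j, Y j) :: t, ?_, by simp [hw]⟩
      intro q hq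
      rcases List.mem_cons.1 hq with h | h
      · subst h
        exact Or.inr ⟨j, rfl, h1, h2, Polynomial.X, by simp⟩
      · exact ht q h

lemma adjC_induction (P : A → Prop) (h0 : P 0)
    (hword : ∀ t, (∀ q ∈ t, okL N k X Y q) → P (wp t))
    (hadd : ∀ x y, P x → P y → P (x + y))
    (hsmul : ∀ (a : ℂ) x, P x → P (a • x)) :
    ∀ c ∈ Algebra.adjoin ℂ (Cgen N k X Y), P c := by
  intro c hc
  have hc' : c ∈ Submodule.span ℂ ((Submonoid.closure (Cgen N k X Y) :
      Submonoid A) : Set A) := by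
    rw [← Algebra.adjoin_eq_span]
    exact hc
  refine Submodule.span_induction ?_ h0 (fun x y _ _ => hadd x y)
    (fun a x _ => hsmul a x) hc'
  intro x hx
  obtain ⟨l, hl, rfl⟩ := Submonoid.exists_list_of_mem_closure hx
  obtain ⟨t, ht, hwt⟩ := gen_word N k X Y l hl
  rw [← hwt]
  exact hword t ht

end Assemble

section Final

variable (E : A →ₗ[ℂ] ℂ) (N k : ℕ) (X Y : ℕ → A)

lemma CX1 (hfree : FreeHyp E N k X Y) (hE1 : E 1 = 1)
    (hEtr : ∀ x y : A, E (x * y) = E (y * x)) (hk : 1 ≤ k)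
    (hA1 : ∀ j, 1 ≤ j → j ≤ k →
      ∀ L : List ℕ, (∀ i ∈ L, 1 ≤ i ∧ i ≤ k) → (∀ i ∈ L, i ≠ j) →
      E (X j * (L.map X).prod) = 0) :
    ∀ c ∈ Algebra.adjoin ℂ (Cgen N k X Y), E (X k * c) = 0 := by
  refine adjC_induction N k X Y (fun c => E (X k * c) = 0) (by simp) ?_ ?_ ?_
  · intro t ht
    have h := M1X E N k X Y hfree hE1 hEtr hk hA1 t ht 1 (one_mem _) 1 (one_mem _)
    rwa [one_mul, mul_one] at h
  · intro x y hx hy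
    rw [mul_add, map_add, hx, hy, add_zero]
  · intro a x hx
    rw [mul_smul_comm, map_smul, hx, smul_zero]

lemma CY1 (hfree : FreeHyp E N k X Y) (hE1 : E 1 = 1) (hkN : k ≤ N)
    (hYk : E (Y k) = 0) :
    ∀ c ∈ Algebra.adjoin ℂ (Cgen N k X Y), E (Y k * c) = 0 := by
  refine adjC_induction N k X Y (fun c => E (Y k * c) = 0) (by simp) ?_ ?_ ?_
  · intro t ht
    exact M1Y E N k X Y hfree hE1 hkN hYk t ht
  · intro x y hx hy
    rw [mul_add, map_add, hx, hy, add_zero]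
  · intro a x hx
    rw [mul_smul_comm, map_smul, hx, smul_zero]

lemma CX2 (hfree : FreeHyp E N k X Y) (hE1 : E 1 = 1)
    (hEtr : ∀ x y : A, E (x * y) = E (y * x)) (hk : 1 ≤ k)
    (hA1 : ∀ j, 1 ≤ j → j ≤ k →
      ∀ L : List ℕ, (∀ i ∈ L, 1 ≤ i ∧ i ≤ k) → (∀ i ∈ L, i ≠ j) →
      E (X j * (L.map X).prod) = 0)
    (hA3 : ∀ j, 2 ≤ j → j ≤ k →
      ∀ L₁ L₂ : List ℕ, (∀ i ∈ L₁, 1 ≤ i ∧ i < j) → (∀ i ∈ L₂, 1 ≤ i ∧ i < j) →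
      E (X j * (L₁.map X).prod * X j * (L₂.map X).prod)
        = E (X j ^ 2) * E ((L₁.map X).prod) * E ((L₂.map X).prod)) :
    ∀ c ∈ Algebra.adjoin ℂ (Cgen N k X Y),
      ∀ c' ∈ Algebra.adjoin ℂ (Cgen N k X Y),
      E (X k * c * X k * c') = E (X k ^ 2) * E c * E c' := by
  refine adjC_induction N k X Y (fun c => ∀ c' ∈ Algebra.adjoin ℂ (Cgen N k X Y),
    E (X k * c * X k * c') = E (X k ^ 2) * E c * E c') ?_ ?_ ?_ ?_
  · intro c' _
    simp
  · intro t ht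
    refine adjC_induction N k X Y (fun c' =>
      E (X k * wp t * X k * c') = E (X k ^ 2) * E (wp t) * E c') (by simp) ?_ ?_ ?_
    · intro u hu
      have h := M2AX E N k X Y hfree hE1 hEtr hk hA1 hA3 t u ht hu
        1 (one_mem _) 1 (one_mem _) 1 (one_mem _) 1 (one_mem _)
      simp only [one_mul, mul_one] at h
      exact h
    · intro x y hx hy
      simp only [mul_add, map_add]
      rw [hx, hy]
      try ring
    · intro a x hx
      simp only [mul_smul_comm, map_smul, smul_eq_mul]
      rw [hx]
      try ring
  · intro x y hx hy c' hc'
    simp only [mul_add, add_mul, map_add]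
    rw [hx c' hc', hy c' hc']
    try ring
  · intro a x hx c' hc'
    simp only [mul_smul_comm, smul_mul_assoc, map_smul, smul_eq_mul]
    rw [hx c' hc']
    try ring

lemma CY2 (hfree : FreeHyp E N k X Y) (hE1 : E 1 = 1) (hkN : k ≤ N)
    (hYk : E (Y k) = 0) :
    ∀ c ∈ Algebra.adjoin ℂ (Cgen N k X Y),
      ∀ c' ∈ Algebra.adjoin ℂ (Cgen N k X Y),
      E (Y k * c * Y k * c') = E (Y k ^ 2) * E c * E c' := by
  refine adjC_induction N k X Y (fun c => ∀ c' ∈ Algebra.adjoin ℂ (Cgen N k X Y),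
    E (Y k * c * Y k * c') = E (Y k ^ 2) * E c * E c') ?_ ?_ ?_ ?_
  · intro c' _
    simp
  · intro t ht
    refine adjC_induction N k X Y (fun c' =>
      E (Y k * wp t * Y k * c') = E (Y k ^ 2) * E (wp t) * E c') (by simp) ?_ ?_ ?_
    · intro u hu
      have h := M2AY E N k X Y hfree hE1 hkN hYk t u ht hu
      rw [show Y k * wp t * Y k * wp u = Y k * wp t * (Y k * wp u) from by
        simp [mul_assoc]]
      exact h
    · intro x y hx hy
      simp only [mul_add, map_add]
      rw [hx, hy]
      try ring
    · intro a x hx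
      simp only [mul_smul_comm, map_smul, smul_eq_mul]
      rw [hx]
      try ring
  · intro x y hx hy c' hc'
    simp only [mul_add, add_mul, map_add]
    rw [hx c' hc', hy c' hc']
    try ring
  · intro a x hx c' hc'
    simp only [mul_smul_comm, smul_mul_assoc, map_smul, smul_eq_mul]
    rw [hx c' hc']
    try ring

end Final

end
end LSwap


/-- The key matching of first and second derivative terms in the Lindeberg swap
(Section 4 of the paper).  Here the variables are indexed as in the paper:
`X 1, …, X k` satisfy Condition A, and `Y k, Y (k+1), …, Y N` are free from each other
and from the unital subalgebra `B` generated by `X 1, …, X k`, with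
`E (Y k ^ 2) = E (X k ^ 2)`.  With `Z = X 1 + … + X (k-1) + Y (k+1) + … + Y N`,
all mixed moments of `Z` with one occurrence of `X k` or `Y k` vanish, and mixed
moments with two occurrences of `X k` agree with those with two occurrences of `Y k`. -/
theorem lindeberg_swap_moments
    {A : Type*} [Ring A] [StarRing A] [Algebra ℂ A] [StarModule ℂ A]
    (E : A →ₗ[ℂ] ℂ)
    (hE1 : E 1 = 1)
    (hEpos : ∀ x : A, 0 ≤ E (star x * x))
    (hEtr : ∀ x y : A, E (x * y) = E (y * x))
    (N k : ℕ) (hk : 1 ≤ k) (hkN : k ≤ N)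
    (X Y : ℕ → A)
    (hXsa : ∀ i, 1 ≤ i → i ≤ k → star (X i) = X i)
    (hXmean : ∀ i, 1 ≤ i → i ≤ k → E (X i) = 0)
    (hYsa : ∀ j, k ≤ j → j ≤ N → star (Y j) = Y j)
    (hYmean : ∀ j, k ≤ j → j ≤ N → E (Y j) = 0)
    (hYvar : E (Y k ^ 2) = E (X k ^ 2))
    -- Condition A for `X 1, …, X k`, part (1)
    (hA1 : ∀ j, 1 ≤ j → j ≤ k →
      ∀ L : List ℕ, (∀ i ∈ L, 1 ≤ i ∧ i ≤ k) → (∀ i ∈ L, i ≠ j) →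
      E (X j * (L.map X).prod) = 0)
    -- Condition A for `X 1, …, X k`, part (2)
    (hA2 : ∀ j, 2 ≤ j → j ≤ k →
      ∀ L : List ℕ, (∀ i ∈ L, 1 ≤ i ∧ i < j) →
      E (X j ^ 2 * (L.map X).prod) = E (X j ^ 2) * E ((L.map X).prod))
    -- Condition A for `X 1, …, X k`, part (3)
    (hA3 : ∀ j, 2 ≤ j → j ≤ k →
      ∀ L₁ L₂ : List ℕ, (∀ i ∈ L₁, 1 ≤ i ∧ i < j) → (∀ i ∈ L₂, 1 ≤ i ∧ i < j) →
      E (X j * (L₁.map X).prod * X j * (L₂.map X).prod)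
        = E (X j ^ 2) * E ((L₁.map X).prod) * E ((L₂.map X).prod))
    -- the subalgebra generated by `X 1, …, X k` and the elements `Y k, …, Y N` are free
    (hfree : ∀ L : List (Option ℕ × A), L ≠ [] →
      (L.map Prod.fst).Chain' (· ≠ ·) →
      (∀ q ∈ L,
        (q.1 = none ∧ q.2 ∈ Algebra.adjoin ℂ {a : A | ∃ i, 1 ≤ i ∧ i ≤ k ∧ a = X i}) ∨
        (∃ j, q.1 = some j ∧ k ≤ j ∧ j ≤ N ∧
          ∃ p : Polynomial ℂ, q.2 = Polynomial.aeval (Y j) p)) →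
      (∀ q ∈ L, E q.2 = 0) →
      E ((L.map Prod.snd).prod) = 0) :
    ∀ p q s : ℕ,
      E ((∑ i ∈ Finset.Icc 1 (k - 1), X i + ∑ j ∈ Finset.Icc (k + 1) N, Y j) ^ p *
          X k *
          (∑ i ∈ Finset.Icc 1 (k - 1), X i + ∑ j ∈ Finset.Icc (k + 1) N, Y j) ^ q) = 0 ∧
      E ((∑ i ∈ Finset.Icc 1 (k - 1), X i + ∑ j ∈ Finset.Icc (k + 1) N, Y j) ^ p *
          Y k *
          (∑ i ∈ Finset.Icc 1 (k - 1), X i + ∑ j ∈ Finset.Icc (k + 1) N, Y j) ^ q) = 0 ∧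
      E ((∑ i ∈ Finset.Icc 1 (k - 1), X i + ∑ j ∈ Finset.Icc (k + 1) N, Y j) ^ p *
          X k *
          (∑ i ∈ Finset.Icc 1 (k - 1), X i + ∑ j ∈ Finset.Icc (k + 1) N, Y j) ^ q *
          X k *
          (∑ i ∈ Finset.Icc 1 (k - 1), X i + ∑ j ∈ Finset.Icc (k + 1) N, Y j) ^ s)
        = E ((∑ i ∈ Finset.Icc 1 (k - 1), X i + ∑ j ∈ Finset.Icc (k + 1) N, Y j) ^ p *
          Y k *
          (∑ i ∈ Finset.Icc 1 (k - 1), X i + ∑ j ∈ Finset.Icc (k + 1) N, Y j) ^ q *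
          Y k *
          (∑ i ∈ Finset.Icc 1 (k - 1), X i + ∑ j ∈ Finset.Icc (k + 1) N, Y j) ^ s) := by
  intro p q s
  have hfree' : LSwap.FreeHyp E N k X Y := hfree
  have hYk0 : E (Y k) = 0 := hYmean k le_rfl hkN
  set Z : A := ∑ i ∈ Finset.Icc 1 (k - 1), X i + ∑ j ∈ Finset.Icc (k + 1) N, Y j
    with hZ
  have hZC : Z ∈ Algebra.adjoin ℂ (LSwap.Cgen N k X Y) := by
    apply add_mem
    · refine sum_mem ?_
      intro i hi
      obtain ⟨h1, h2⟩ := Finset.mem_Icc.1 hi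
      exact Algebra.subset_adjoin (Or.inl ⟨i, h1, by omega, rfl⟩)
    · refine sum_mem ?_
      intro j hj
      obtain ⟨h1, h2⟩ := Finset.mem_Icc.1 hj
      exact Algebra.subset_adjoin (Or.inr ⟨j, h1, h2, rfl⟩)
  have hZp : ∀ m : ℕ, Z ^ m ∈ Algebra.adjoin ℂ (LSwap.Cgen N k X Y) :=
    fun m => pow_mem hZC m
  refine ⟨?_, ?_, ?_⟩
  · rw [hEtr (Z ^ p * X k) (Z ^ q),
      show Z ^ q * (Z ^ p * X k) = Z ^ q * Z ^ p * X k from by simp [mul_assoc],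
      hEtr (Z ^ q * Z ^ p) (X k), ← pow_add]
    exact LSwap.CX1 E N k X Y hfree' hE1 hEtr hk hA1 _ (hZp (q + p))
  · rw [hEtr (Z ^ p * Y k) (Z ^ q),
      show Z ^ q * (Z ^ p * Y k) = Z ^ q * Z ^ p * Y k from by simp [mul_assoc],
      hEtr (Z ^ q * Z ^ p) (Y k), ← pow_add]
    exact LSwap.CY1 E N k X Y hfree' hE1 hkN hYk0 _ (hZp (q + p))
  · have eX : E (Z ^ p * X k * Z ^ q * X k * Z ^ s)
        = E (X k * Z ^ q * X k * Z ^ (s + p)) := by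
      rw [hEtr (Z ^ p * X k * Z ^ q * X k) (Z ^ s),
        show Z ^ s * (Z ^ p * X k * Z ^ q * X k)
          = Z ^ s * Z ^ p * (X k * Z ^ q * X k) from by simp [mul_assoc],
        hEtr (Z ^ s * Z ^ p) (X k * Z ^ q * X k), ← pow_add]
    have eY : E (Z ^ p * Y k * Z ^ q * Y k * Z ^ s)
        = E (Y k * Z ^ q * Y k * Z ^ (s + p)) := by
      rw [hEtr (Z ^ p * Y k * Z ^ q * Y k) (Z ^ s),
        show Z ^ s * (Z ^ p * Y k * Z ^ q * Y k)
          = Z ^ s * Z ^ p * (Y k * Z ^ q * Y k) from by simp [mul_assoc],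
        hEtr (Z ^ s * Z ^ p) (Y k * Z ^ q * Y k), ← pow_add]
    rw [eX, eY,
      LSwap.CX2 E N k X Y hfree' hE1 hEtr hk hA1 hA3 (Z ^ q) (hZp q)
        (Z ^ (s + p)) (hZp (s + p)),
      LSwap.CY2 E N k X Y hfree' hE1 hkN hYk0 (Z ^ q) (hZp q)
        (Z ^ (s + p)) (hZp (s + p)), hYvar]
end

section
/- For every i ≥ 1, E(X_i) = 0 and E(X_i^2) = 2. -/
noncomputable section

/-- The relator set `{(f_k f_{k-1})^3 : k ≥ 2}`.  Generators are 0-indexed: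
`FreeGroup.of n` represents the generator `f_{n+1}` of the paper, so the relators are
`(of k * of (k-1))^3` for `k ≥ 1`. -/
def relSet : Set (FreeGroup ℕ) :=
  {w | ∃ k : ℕ, 1 ≤ k ∧ w = (FreeGroup.of k * FreeGroup.of (k - 1)) ^ 3}

/-- The group `G = F / ⟪relSet⟫`. -/
abbrev G : Type := FreeGroup ℕ ⧸ Subgroup.normalClosure relSet

/-- The quotient map `π : F → G`. -/
def piG : FreeGroup ℕ →* G := QuotientGroup.mk' _

/-- The complex group algebra `A = ℂ[G]`. -/
abbrev GA : Type := MonoidAlgebra ℂ G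

/-- The expectation `E : A → ℂ`, the coefficient of the identity element. -/
def Ee (a : GA) : ℂ := a.coeff 1

/-- `X i = f̄_{i+1} + f̄_{i+1}⁻¹` (0-indexed: `Xe i` is `X_{i+1}` of the paper). -/
def Xe (i : ℕ) : GA :=
  MonoidAlgebra.of ℂ G (piG (FreeGroup.of i)) +
    MonoidAlgebra.of ℂ G ((piG (FreeGroup.of i))⁻¹)

/-- Test homomorphism sending every generator to `1 : ZMod 6`. -/
def phi6 : FreeGroup ℕ →* Multiplicative (ZMod 6) :=
  FreeGroup.lift fun _ => Multiplicative.ofAdd (1 : ZMod 6)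

lemma normalClosure_le_ker : Subgroup.normalClosure relSet ≤ phi6.ker := by
  apply Subgroup.normalClosure_le_normal
  rintro w ⟨k, hk, rfl⟩
  simp only [SetLike.mem_coe, MonoidHom.mem_ker, map_pow, map_mul, phi6, FreeGroup.lift_apply_of]
  decide

/-- Induced map on the quotient. -/
def psi6 : G →* Multiplicative (ZMod 6) :=
  QuotientGroup.lift _ phi6 normalClosure_le_ker

lemma psi6_gen (i : ℕ) : psi6 (piG (FreeGroup.of i)) = Multiplicative.ofAdd (1 : ZMod 6) := by
  simp [psi6, piG, phi6]

lemma gen_ne_one (i : ℕ) : piG (FreeGroup.of i) ≠ 1 := by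
  intro h
  have := psi6_gen i
  rw [h, map_one] at this
  exact absurd this.symm (by decide)

lemma gen_sq_ne_one (i : ℕ) : piG (FreeGroup.of i) * piG (FreeGroup.of i) ≠ 1 := by
  intro h
  have : psi6 (piG (FreeGroup.of i) * piG (FreeGroup.of i)) = 1 := by rw [h, map_one]
  rw [map_mul, psi6_gen] at this
  exact absurd this (by decide)

/-- For every `i`, `E(X_i) = 0` and `E(X_i²) = 2`. -/
theorem Xe_mean_and_variance (i : ℕ) : Ee (Xe i) = 0 ∧ Ee (Xe i ^ 2) = 2 := by
  set g := piG (FreeGroup.of i) with hg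
  have h1 : g ≠ 1 := gen_ne_one i
  have h1' : g⁻¹ ≠ 1 := by simpa using h1
  have h2 : g * g ≠ 1 := gen_sq_ne_one i
  have h2' : g⁻¹ * g⁻¹ ≠ 1 := by
    intro h
    apply h2
    have := congrArg (fun x => x⁻¹) h
    simpa [mul_inv_rev] using this
  constructor
  · show (Xe i).coeff 1 = 0
    rw [Xe, MonoidAlgebra.of_apply, MonoidAlgebra.of_apply, ← hg]
    show (Finsupp.single g (1:ℂ)) 1 + (Finsupp.single g⁻¹ (1:ℂ)) 1 = 0
    rw [Finsupp.single_eq_of_ne' h1, Finsupp.single_eq_of_ne' h1', add_zero]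
  · have expand : (Xe i) ^ 2 =
        MonoidAlgebra.single (g * g) (1 : ℂ) + (MonoidAlgebra.single (1 : G) 1 +
        (MonoidAlgebra.single (1 : G) 1 + MonoidAlgebra.single (g⁻¹ * g⁻¹) 1)) := by
      rw [sq, Xe, MonoidAlgebra.of_apply, MonoidAlgebra.of_apply, ← hg, add_mul, mul_add,
        mul_add, MonoidAlgebra.single_mul_single, MonoidAlgebra.single_mul_single,
        MonoidAlgebra.single_mul_single, MonoidAlgebra.single_mul_single, one_mul,
        mul_inv_cancel, inv_mul_cancel, add_assoc]
    show (Xe i ^ 2).coeff 1 = 2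
    rw [expand]
    show (Finsupp.single (g*g) (1:ℂ)) 1 + ((Finsupp.single (1:G) (1:ℂ)) 1 +
      ((Finsupp.single (1:G) (1:ℂ)) 1 + (Finsupp.single (g⁻¹*g⁻¹) (1:ℂ)) 1)) = 2
    rw [Finsupp.single_eq_of_ne' h2, Finsupp.single_eq_of_ne' h2', Finsupp.single_eq_same]
    norm_num
end
end

section
/- E(X_2 X_1 X_2 X_1 X_2 X_1) = 2. -/
noncomputable section

/-- Witness permutation `α ∈ S₅`. -/
def pα : Equiv.Perm (Fin 5) := ⟨![4,0,1,3,2], ![1,2,4,3,0], by decide, by decide⟩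

/-- Witness permutation `β ∈ S₅`. -/
def pβ : Equiv.Perm (Fin 5) := ⟨![4,2,3,1,0], ![4,3,1,2,0], by decide, by decide⟩

/-- `f_{k+1} ↦ β` for `k = 0`, `α` for odd `k`, `α⁻¹` for even `k ≥ 2`. -/
def gmap : ℕ → Equiv.Perm (Fin 5) := fun k => if k = 0 then pβ else if k % 2 = 1 then pα else pα⁻¹

def φF : FreeGroup ℕ →* Equiv.Perm (Fin 5) := FreeGroup.lift gmap

lemma rel_ker : Subgroup.normalClosure relSet ≤ φF.ker := by
  apply Subgroup.normalClosure_le_normal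
  rintro w ⟨k, hk, rfl⟩
  have hφ : ∀ n, φF (FreeGroup.of n) = gmap n := fun n => FreeGroup.lift_apply_of
  simp only [SetLike.mem_coe, MonoidHom.mem_ker, map_pow, map_mul, hφ]
  rcases eq_or_lt_of_le hk with h1 | h2
  · have hk1 : k = 1 := h1.symm
    subst hk1
    have h : (gmap 1 * gmap 0) ^ 3 = 1 := by
      have e1 : gmap 1 = pα := by simp [gmap]
      have e0 : gmap 0 = pβ := by simp [gmap]
      rw [e1, e0]; decide
    simpa using h
  · have hk2 : 2 ≤ k := h2
    have h : gmap k * gmap (k-1) = 1 := by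
      rcases Nat.even_or_odd k with he | ho
      · have e1 : gmap k = pα⁻¹ := by
          simp only [gmap, if_neg (by omega : ¬ k = 0),
            if_neg (by rw [Nat.even_iff] at he; omega : ¬ k % 2 = 1)]
        have e2 : gmap (k-1) = pα := by
          simp only [gmap, if_neg (by omega : ¬ k - 1 = 0),
            if_pos (by rw [Nat.even_iff] at he; omega : (k-1) % 2 = 1)]
        rw [e1, e2, inv_mul_cancel]
      · have e1 : gmap k = pα := by
          simp only [gmap, if_neg (by omega : ¬ k = 0),
            if_pos (by rw [Nat.odd_iff] at ho; omega : k % 2 = 1)]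
        have e2 : gmap (k-1) = pα⁻¹ := by
          simp only [gmap, if_neg (by omega : ¬ k - 1 = 0),
            if_neg (by rw [Nat.odd_iff] at ho; omega : ¬ (k-1) % 2 = 1)]
        rw [e1, e2, mul_inv_cancel]
    simp [h]

def φ : G →* Equiv.Perm (Fin 5) :=
  QuotientGroup.lift _ φF (fun _ hx => rel_ker hx)

lemma φ_a : φ (piG (FreeGroup.of 1)) = pα := by
  show FreeGroup.lift gmap (FreeGroup.of 1) = pα
  rw [FreeGroup.lift_apply_of]; simp [gmap]

lemma φ_b : φ (piG (FreeGroup.of 0)) = pβ := by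
  show FreeGroup.lift gmap (FreeGroup.of 0) = pβ
  rw [FreeGroup.lift_apply_of]; simp [gmap]

lemma ne_one_of_φ {x : G} (h : φ x ≠ 1) : x ≠ 1 := fun hx => h (hx ▸ map_one φ)

lemma Ee_add (x y : GA) : Ee (x + y) = Ee x + Ee y := Finsupp.add_apply x.coeff y.coeff 1

lemma Ee_of_ne {g : G} (h : g ≠ 1) : Ee (MonoidAlgebra.of ℂ G g) = 0 :=
  (Finsupp.single_eq_of_ne' h : (Finsupp.single g (1 : ℂ)) 1 = 0)

lemma Ee_of_one : Ee (MonoidAlgebra.of ℂ G (1 : G)) = 1 := (Finsupp.single_eq_same : (Finsupp.single (1 : G) (1 : ℂ)) 1 = 1)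

lemma hab : (piG (FreeGroup.of 1) * piG (FreeGroup.of 0))^3 = 1 := by
  rw [← map_mul, ← map_pow]
  exact (QuotientGroup.eq_one_iff _).mpr
    (Subgroup.subset_normalClosure ⟨1, le_refl 1, rfl⟩)

set_option maxHeartbeats 2000000 in
/-- `E(X₂ X₁ X₂ X₁ X₂ X₁) = 2` (in the 0-indexed notation, `X₂ = Xe 1`, `X₁ = Xe 0`). -/
theorem expectation_X2X1_cubed :
    Ee (Xe 1 * Xe 0 * Xe 1 * Xe 0 * Xe 1 * Xe 0) = 2 := by
  simp only [Xe]
  set a : G := piG (FreeGroup.of 1) with hadef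
  set b : G := piG (FreeGroup.of 0) with hbdef
  have hφa : φ a = pα := φ_a
  have hφb : φ b = pβ := φ_b
  have hab' : (a * b)^3 = 1 := hab
  clear_value a b
  have hP1 : a * b * a * b * a * b = 1 := by
    rw [show a * b * a * b * a * b = (a*b)^3 by simp only [pow_succ, pow_zero, one_mul, mul_assoc], hab']
  have hba : (b * a)^3 = 1 := by
    rw [show (b*a)^3 = b * (a*b)^3 * b⁻¹ by
      simp only [pow_succ, pow_zero, one_mul, mul_assoc, mul_inv_cancel, mul_one], hab']
    simp
  have hP2 : a⁻¹ * b⁻¹ * a⁻¹ * b⁻¹ * a⁻¹ * b⁻¹ = 1 := by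
    rw [show a⁻¹ * b⁻¹ * a⁻¹ * b⁻¹ * a⁻¹ * b⁻¹ = ((b*a)^3)⁻¹ by
      simp only [pow_succ, pow_zero, one_mul, inv_one, mul_inv_rev, mul_assoc], hba, inv_one]
  have hN1 : a * b * a * b * a * b⁻¹ ≠ (1 : G) := ne_one_of_φ (by
    simp only [map_mul, map_inv, hφa, hφb]; decide)
  have hN2 : a * b * a * b * a⁻¹ * b ≠ (1 : G) := ne_one_of_φ (by
    simp only [map_mul, map_inv, hφa, hφb]; decide)
  have hN3 : a * b * a * b * a⁻¹ * b⁻¹ ≠ (1 : G) := ne_one_of_φ (by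
    simp only [map_mul, map_inv, hφa, hφb]; decide)
  have hN4 : a * b * a * b⁻¹ * a * b ≠ (1 : G) := ne_one_of_φ (by
    simp only [map_mul, map_inv, hφa, hφb]; decide)
  have hN5 : a * b * a * b⁻¹ * a * b⁻¹ ≠ (1 : G) := ne_one_of_φ (by
    simp only [map_mul, map_inv, hφa, hφb]; decide)
  have hN6 : a * b * a * b⁻¹ * a⁻¹ * b ≠ (1 : G) := ne_one_of_φ (by
    simp only [map_mul, map_inv, hφa, hφb]; decide)
  have hN7 : a * b * a * b⁻¹ * a⁻¹ * b⁻¹ ≠ (1 : G) := ne_one_of_φ (by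
    simp only [map_mul, map_inv, hφa, hφb]; decide)
  have hN8 : a * b * a⁻¹ * b * a * b ≠ (1 : G) := ne_one_of_φ (by
    simp only [map_mul, map_inv, hφa, hφb]; decide)
  have hN9 : a * b * a⁻¹ * b * a * b⁻¹ ≠ (1 : G) := ne_one_of_φ (by
    simp only [map_mul, map_inv, hφa, hφb]; decide)
  have hN10 : a * b * a⁻¹ * b * a⁻¹ * b ≠ (1 : G) := ne_one_of_φ (by
    simp only [map_mul, map_inv, hφa, hφb]; decide)
  have hN11 : a * b * a⁻¹ * b * a⁻¹ * b⁻¹ ≠ (1 : G) := ne_one_of_φ (by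
    simp only [map_mul, map_inv, hφa, hφb]; decide)
  have hN12 : a * b * a⁻¹ * b⁻¹ * a * b ≠ (1 : G) := ne_one_of_φ (by
    simp only [map_mul, map_inv, hφa, hφb]; decide)
  have hN13 : a * b * a⁻¹ * b⁻¹ * a * b⁻¹ ≠ (1 : G) := ne_one_of_φ (by
    simp only [map_mul, map_inv, hφa, hφb]; decide)
  have hN14 : a * b * a⁻¹ * b⁻¹ * a⁻¹ * b ≠ (1 : G) := ne_one_of_φ (by
    simp only [map_mul, map_inv, hφa, hφb]; decide)
  have hN15 : a * b * a⁻¹ * b⁻¹ * a⁻¹ * b⁻¹ ≠ (1 : G) := ne_one_of_φ (by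
    simp only [map_mul, map_inv, hφa, hφb]; decide)
  have hN16 : a * b⁻¹ * a * b * a * b ≠ (1 : G) := ne_one_of_φ (by
    simp only [map_mul, map_inv, hφa, hφb]; decide)
  have hN17 : a * b⁻¹ * a * b * a * b⁻¹ ≠ (1 : G) := ne_one_of_φ (by
    simp only [map_mul, map_inv, hφa, hφb]; decide)
  have hN18 : a * b⁻¹ * a * b * a⁻¹ * b ≠ (1 : G) := ne_one_of_φ (by
    simp only [map_mul, map_inv, hφa, hφb]; decide)
  have hN19 : a * b⁻¹ * a * b * a⁻¹ * b⁻¹ ≠ (1 : G) := ne_one_of_φ (by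
    simp only [map_mul, map_inv, hφa, hφb]; decide)
  have hN20 : a * b⁻¹ * a * b⁻¹ * a * b ≠ (1 : G) := ne_one_of_φ (by
    simp only [map_mul, map_inv, hφa, hφb]; decide)
  have hN21 : a * b⁻¹ * a * b⁻¹ * a * b⁻¹ ≠ (1 : G) := ne_one_of_φ (by
    simp only [map_mul, map_inv, hφa, hφb]; decide)
  have hN22 : a * b⁻¹ * a * b⁻¹ * a⁻¹ * b ≠ (1 : G) := ne_one_of_φ (by
    simp only [map_mul, map_inv, hφa, hφb]; decide)
  have hN23 : a * b⁻¹ * a * b⁻¹ * a⁻¹ * b⁻¹ ≠ (1 : G) := ne_one_of_φ (by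
    simp only [map_mul, map_inv, hφa, hφb]; decide)
  have hN24 : a * b⁻¹ * a⁻¹ * b * a * b ≠ (1 : G) := ne_one_of_φ (by
    simp only [map_mul, map_inv, hφa, hφb]; decide)
  have hN25 : a * b⁻¹ * a⁻¹ * b * a * b⁻¹ ≠ (1 : G) := ne_one_of_φ (by
    simp only [map_mul, map_inv, hφa, hφb]; decide)
  have hN26 : a * b⁻¹ * a⁻¹ * b * a⁻¹ * b ≠ (1 : G) := ne_one_of_φ (by
    simp only [map_mul, map_inv, hφa, hφb]; decide)
  have hN27 : a * b⁻¹ * a⁻¹ * b * a⁻¹ * b⁻¹ ≠ (1 : G) := ne_one_of_φ (by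
    simp only [map_mul, map_inv, hφa, hφb]; decide)
  have hN28 : a * b⁻¹ * a⁻¹ * b⁻¹ * a * b ≠ (1 : G) := ne_one_of_φ (by
    simp only [map_mul, map_inv, hφa, hφb]; decide)
  have hN29 : a * b⁻¹ * a⁻¹ * b⁻¹ * a * b⁻¹ ≠ (1 : G) := ne_one_of_φ (by
    simp only [map_mul, map_inv, hφa, hφb]; decide)
  have hN30 : a * b⁻¹ * a⁻¹ * b⁻¹ * a⁻¹ * b ≠ (1 : G) := ne_one_of_φ (by
    simp only [map_mul, map_inv, hφa, hφb]; decide)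
  have hN31 : a * b⁻¹ * a⁻¹ * b⁻¹ * a⁻¹ * b⁻¹ ≠ (1 : G) := ne_one_of_φ (by
    simp only [map_mul, map_inv, hφa, hφb]; decide)
  have hN32 : a⁻¹ * b * a * b * a * b ≠ (1 : G) := ne_one_of_φ (by
    simp only [map_mul, map_inv, hφa, hφb]; decide)
  have hN33 : a⁻¹ * b * a * b * a * b⁻¹ ≠ (1 : G) := ne_one_of_φ (by
    simp only [map_mul, map_inv, hφa, hφb]; decide)
  have hN34 : a⁻¹ * b * a * b * a⁻¹ * b ≠ (1 : G) := ne_one_of_φ (by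
    simp only [map_mul, map_inv, hφa, hφb]; decide)
  have hN35 : a⁻¹ * b * a * b * a⁻¹ * b⁻¹ ≠ (1 : G) := ne_one_of_φ (by
    simp only [map_mul, map_inv, hφa, hφb]; decide)
  have hN36 : a⁻¹ * b * a * b⁻¹ * a * b ≠ (1 : G) := ne_one_of_φ (by
    simp only [map_mul, map_inv, hφa, hφb]; decide)
  have hN37 : a⁻¹ * b * a * b⁻¹ * a * b⁻¹ ≠ (1 : G) := ne_one_of_φ (by
    simp only [map_mul, map_inv, hφa, hφb]; decide)
  have hN38 : a⁻¹ * b * a * b⁻¹ * a⁻¹ * b ≠ (1 : G) := ne_one_of_φ (by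
    simp only [map_mul, map_inv, hφa, hφb]; decide)
  have hN39 : a⁻¹ * b * a * b⁻¹ * a⁻¹ * b⁻¹ ≠ (1 : G) := ne_one_of_φ (by
    simp only [map_mul, map_inv, hφa, hφb]; decide)
  have hN40 : a⁻¹ * b * a⁻¹ * b * a * b ≠ (1 : G) := ne_one_of_φ (by
    simp only [map_mul, map_inv, hφa, hφb]; decide)
  have hN41 : a⁻¹ * b * a⁻¹ * b * a * b⁻¹ ≠ (1 : G) := ne_one_of_φ (by
    simp only [map_mul, map_inv, hφa, hφb]; decide)
  have hN42 : a⁻¹ * b * a⁻¹ * b * a⁻¹ * b ≠ (1 : G) := ne_one_of_φ (by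
    simp only [map_mul, map_inv, hφa, hφb]; decide)
  have hN43 : a⁻¹ * b * a⁻¹ * b * a⁻¹ * b⁻¹ ≠ (1 : G) := ne_one_of_φ (by
    simp only [map_mul, map_inv, hφa, hφb]; decide)
  have hN44 : a⁻¹ * b * a⁻¹ * b⁻¹ * a * b ≠ (1 : G) := ne_one_of_φ (by
    simp only [map_mul, map_inv, hφa, hφb]; decide)
  have hN45 : a⁻¹ * b * a⁻¹ * b⁻¹ * a * b⁻¹ ≠ (1 : G) := ne_one_of_φ (by
    simp only [map_mul, map_inv, hφa, hφb]; decide)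
  have hN46 : a⁻¹ * b * a⁻¹ * b⁻¹ * a⁻¹ * b ≠ (1 : G) := ne_one_of_φ (by
    simp only [map_mul, map_inv, hφa, hφb]; decide)
  have hN47 : a⁻¹ * b * a⁻¹ * b⁻¹ * a⁻¹ * b⁻¹ ≠ (1 : G) := ne_one_of_φ (by
    simp only [map_mul, map_inv, hφa, hφb]; decide)
  have hN48 : a⁻¹ * b⁻¹ * a * b * a * b ≠ (1 : G) := ne_one_of_φ (by
    simp only [map_mul, map_inv, hφa, hφb]; decide)
  have hN49 : a⁻¹ * b⁻¹ * a * b * a * b⁻¹ ≠ (1 : G) := ne_one_of_φ (by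
    simp only [map_mul, map_inv, hφa, hφb]; decide)
  have hN50 : a⁻¹ * b⁻¹ * a * b * a⁻¹ * b ≠ (1 : G) := ne_one_of_φ (by
    simp only [map_mul, map_inv, hφa, hφb]; decide)
  have hN51 : a⁻¹ * b⁻¹ * a * b * a⁻¹ * b⁻¹ ≠ (1 : G) := ne_one_of_φ (by
    simp only [map_mul, map_inv, hφa, hφb]; decide)
  have hN52 : a⁻¹ * b⁻¹ * a * b⁻¹ * a * b ≠ (1 : G) := ne_one_of_φ (by
    simp only [map_mul, map_inv, hφa, hφb]; decide)
  have hN53 : a⁻¹ * b⁻¹ * a * b⁻¹ * a * b⁻¹ ≠ (1 : G) := ne_one_of_φ (by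
    simp only [map_mul, map_inv, hφa, hφb]; decide)
  have hN54 : a⁻¹ * b⁻¹ * a * b⁻¹ * a⁻¹ * b ≠ (1 : G) := ne_one_of_φ (by
    simp only [map_mul, map_inv, hφa, hφb]; decide)
  have hN55 : a⁻¹ * b⁻¹ * a * b⁻¹ * a⁻¹ * b⁻¹ ≠ (1 : G) := ne_one_of_φ (by
    simp only [map_mul, map_inv, hφa, hφb]; decide)
  have hN56 : a⁻¹ * b⁻¹ * a⁻¹ * b * a * b ≠ (1 : G) := ne_one_of_φ (by
    simp only [map_mul, map_inv, hφa, hφb]; decide)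
  have hN57 : a⁻¹ * b⁻¹ * a⁻¹ * b * a * b⁻¹ ≠ (1 : G) := ne_one_of_φ (by
    simp only [map_mul, map_inv, hφa, hφb]; decide)
  have hN58 : a⁻¹ * b⁻¹ * a⁻¹ * b * a⁻¹ * b ≠ (1 : G) := ne_one_of_φ (by
    simp only [map_mul, map_inv, hφa, hφb]; decide)
  have hN59 : a⁻¹ * b⁻¹ * a⁻¹ * b * a⁻¹ * b⁻¹ ≠ (1 : G) := ne_one_of_φ (by
    simp only [map_mul, map_inv, hφa, hφb]; decide)
  have hN60 : a⁻¹ * b⁻¹ * a⁻¹ * b⁻¹ * a * b ≠ (1 : G) := ne_one_of_φ (by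
    simp only [map_mul, map_inv, hφa, hφb]; decide)
  have hN61 : a⁻¹ * b⁻¹ * a⁻¹ * b⁻¹ * a * b⁻¹ ≠ (1 : G) := ne_one_of_φ (by
    simp only [map_mul, map_inv, hφa, hφb]; decide)
  have hN62 : a⁻¹ * b⁻¹ * a⁻¹ * b⁻¹ * a⁻¹ * b ≠ (1 : G) := ne_one_of_φ (by
    simp only [map_mul, map_inv, hφa, hφb]; decide)
  simp only [mul_add, add_mul, ← map_mul]
  simp only [hP1, hP2]
  simp only [Ee_add, Ee_of_one, Ee_of_ne hN1, Ee_of_ne hN2, Ee_of_ne hN3, Ee_of_ne hN4, Ee_of_ne hN5, Ee_of_ne hN6, Ee_of_ne hN7, Ee_of_ne hN8, Ee_of_ne hN9, Ee_of_ne hN10, Ee_of_ne hN11, Ee_of_ne hN12, Ee_of_ne hN13, Ee_of_ne hN14, Ee_of_ne hN15, Ee_of_ne hN16, Ee_of_ne hN17, Ee_of_ne hN18, Ee_of_ne hN19, Ee_of_ne hN20, Ee_of_ne hN21, Ee_of_ne hN22, Ee_of_ne hN23, Ee_of_ne hN24, Ee_of_ne hN25, Ee_of_ne hN26, Ee_of_ne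 hN27, Ee_of_ne hN28, Ee_of_ne hN29, Ee_of_ne hN30, Ee_of_ne hN31, Ee_of_ne hN32, Ee_of_ne hN33, Ee_of_ne hN34, Ee_of_ne hN35, Ee_of_ne hN36, Ee_of_ne hN37, Ee_of_ne hN38, Ee_of_ne hN39, Ee_of_ne hN40, Ee_of_ne hN41, Ee_of_ne hN42, Ee_of_ne hN43, Ee_of_ne hN44, Ee_of_ne hN45, Ee_of_ne hN46, Ee_of_ne hN47, Ee_of_ne hN48, Ee_of_ne hN49, Ee_of_ne hN50, Ee_of_ne hN51, Ee_of_ne hN52, Ee_of_ne hN53, Ee_of_ne hN54, Ee_of_ne hN55, Ee_of_ne hN56, Ee_of_ne hN57, Ee_of_ne hN58, Ee_of_ne hN59, Ee_of_ne hN60, Ee_of_ne hN61, Ee_of_ne hN62]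
  norm_num
end
end

section
/- The elements X_1 and X_2 of the group algebra A = ℂ[G] are not free with respect to E: it is not the case that for every m ≥ 1, every sequence of indices k(1), …, k(m) ∈ {1, 2} with k(j) ≠ k(j+1) for all j < m, and every choice of complex polynomials p_1, …, p_m with E(p_j(X_{k(j)})) = 0 for all j, one has E(p_1(X_{k(1)}) ⋯ p_m(X_{k(m)})) = 0. -/
noncomputable section

-- generator images
def gg (i : ℕ) : G := piG (FreeGroup.of i)

-- nontriviality of generators
def phi0 : FreeGroup ℕ →* Multiplicative (ZMod 3) :=
  FreeGroup.lift (fun _ => Multiplicative.ofAdd 1)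

lemma gg_ne_one (i : ℕ) : gg i ≠ 1 := by
  have hker : Subgroup.normalClosure relSet ≤ phi0.ker := by
    apply Subgroup.normalClosure_le_normal
    rintro w ⟨k, hk, rfl⟩
    simp only [SetLike.mem_coe, MonoidHom.mem_ker, map_pow, map_mul, phi0, FreeGroup.lift_apply_of]
    decide
  set φ : G →* Multiplicative (ZMod 3) := QuotientGroup.lift _ phi0 hker
  intro h
  have : φ (gg i) = 1 := by rw [h, map_one]
  have h2 : φ (gg i) = Multiplicative.ofAdd 1 := by
    simp [φ, gg, piG, phi0]
  rw [h2] at this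
  exact absurd this (by decide)

-- the relation
lemma rel_one : (gg 1 * gg 0) ^ 3 = 1 := by
  have : piG ((FreeGroup.of 1 * FreeGroup.of 0) ^ 3) = 1 := by
    rw [piG, QuotientGroup.mk'_apply, QuotientGroup.eq_one_iff]
    exact Subgroup.subset_normalClosure ⟨1, le_refl 1, rfl⟩
  simpa [gg, map_pow, map_mul] using this

-- embedding of NNReal monoid algebra
def nnCoe : NNReal →+* ℂ := Complex.ofRealHom.comp NNReal.toRealHom

def emb : MonoidAlgebra NNReal G →+* GA :=
  MonoidAlgebra.liftNCRingHom (MonoidAlgebra.singleOneRingHom.comp nnCoe)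
    (MonoidAlgebra.of ℂ G)
    (fun r g => by
      show MonoidAlgebra.single (1:G) (nnCoe r) * MonoidAlgebra.single g 1
        = MonoidAlgebra.single g 1 * MonoidAlgebra.single (1:G) (nnCoe r)
      rw [MonoidAlgebra.single_mul_single, MonoidAlgebra.single_mul_single,
        one_mul, mul_one, one_mul, mul_one])

lemma emb_single (g : G) (r : NNReal) :
    emb (MonoidAlgebra.single g r) = MonoidAlgebra.single g (r : ℂ) := by
  simp [emb, MonoidAlgebra.liftNCRingHom, MonoidAlgebra.liftNC_single, nnCoe,
    MonoidAlgebra.single_mul_single]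

lemma emb_apply_one (Q : MonoidAlgebra NNReal G) : Ee (emb Q) = ((Q.coeff 1 : NNReal) : ℂ) := by
  induction Q using MonoidAlgebra.induction_linear with
  | zero => simp [Ee]
  | add a b ha hb =>
      rw [map_add]
      show (emb a + emb b).coeff 1 = _
      rw [MonoidAlgebra.coeff_add, MonoidAlgebra.coeff_add, Finsupp.add_apply, Finsupp.add_apply]
      push_cast
      rw [← ha, ← hb]; rfl
  | single g r =>
      classical
      rw [emb_single]
      show (MonoidAlgebra.single g (r:ℂ)).coeff 1 = (((MonoidAlgebra.single g r).coeff 1 : NNReal) : ℂ)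
      rw [MonoidAlgebra.coeff_single, MonoidAlgebra.coeff_single, Finsupp.single_apply, Finsupp.single_apply]
      split <;> simp

-- key inequality
lemma mul_apply_ge (a b : MonoidAlgebra NNReal G) (g h : G) :
    a.coeff g * b.coeff h ≤ (a * b).coeff (g * h) := by
  conv_rhs => rw [← MonoidAlgebra.single_add_erase g a, ← MonoidAlgebra.single_add_erase h b]
  rw [add_mul, mul_add, MonoidAlgebra.single_mul_single]
  show _ ≤ (MonoidAlgebra.single (g*h) (a.coeff g * b.coeff h) + _ + _).coeff (g*h)
  rw [MonoidAlgebra.coeff_add, MonoidAlgebra.coeff_add, Finsupp.add_apply, Finsupp.add_apply,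
    MonoidAlgebra.coeff_single, Finsupp.single_eq_same]
  exact le_add_right (le_add_right le_rfl)

lemma step (a b : MonoidAlgebra NNReal G) (g h : G) (ha : 1 ≤ a.coeff g) (hb : 1 ≤ b.coeff h) :
    1 ≤ (a * b).coeff (g * h) :=
  le_trans (by simpa using mul_le_mul' ha hb) (mul_apply_ge a b g h)

def Y (i : ℕ) : MonoidAlgebra NNReal G :=
  MonoidAlgebra.single (gg i) 1 + MonoidAlgebra.single (gg i)⁻¹ 1

lemma Y_self (i : ℕ) : 1 ≤ (Y i).coeff (gg i) := by
  rw [Y, MonoidAlgebra.coeff_add, Finsupp.add_apply, MonoidAlgebra.coeff_single, Finsupp.single_eq_same]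
  exact le_self_add

lemma emb_Y (i : ℕ) : emb (Y i) = Xe i := by
  rw [Y, map_add, emb_single, emb_single]
  rfl

lemma word_eq_one : gg 1 * (gg 0 * (gg 1 * (gg 0 * (gg 1 * gg 0)))) = 1 := by
  have := rel_one
  rw [pow_succ, pow_succ, pow_one] at this
  calc gg 1 * (gg 0 * (gg 1 * (gg 0 * (gg 1 * gg 0))))
      = gg 1 * gg 0 * (gg 1 * gg 0) * (gg 1 * gg 0) := by group
    _ = 1 := this

lemma Ee_prod_ne : Ee (Xe 1 * (Xe 0 * (Xe 1 * (Xe 0 * (Xe 1 * Xe 0))))) ≠ 0 := by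
  have key : (1 : NNReal) ≤ (Y 1 * (Y 0 * (Y 1 * (Y 0 * (Y 1 * Y 0))))).coeff 1 := by
    rw [← word_eq_one]
    exact step _ _ _ _ (Y_self 1) (step _ _ _ _ (Y_self 0) (step _ _ _ _ (Y_self 1)
      (step _ _ _ _ (Y_self 0) (step _ _ _ _ (Y_self 1) (Y_self 0)))))
  have : Ee (Xe 1 * (Xe 0 * (Xe 1 * (Xe 0 * (Xe 1 * Xe 0)))))
      = (((Y 1 * (Y 0 * (Y 1 * (Y 0 * (Y 1 * Y 0))))).coeff 1 : NNReal) : ℂ) := by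
    rw [← emb_apply_one]; simp only [map_mul, emb_Y]
  rw [this]
  have hne : ((Y 1 * (Y 0 * (Y 1 * (Y 0 * (Y 1 * Y 0))))).coeff 1 : NNReal) ≠ 0 :=
    fun h => by simp [h] at key
  exact_mod_cast hne

lemma Ee_Xe (i : ℕ) : Ee (Xe i) = 0 := by
  classical
  have h1 : gg i ≠ 1 := gg_ne_one i
  have h2 : (gg i)⁻¹ ≠ 1 := by simpa [inv_eq_one] using h1
  show (MonoidAlgebra.single (gg i) (1:ℂ) + MonoidAlgebra.single (gg i)⁻¹ (1:ℂ)).coeff 1 = 0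
  rw [MonoidAlgebra.coeff_add, Finsupp.add_apply, MonoidAlgebra.coeff_single, MonoidAlgebra.coeff_single, Finsupp.single_apply, Finsupp.single_apply, if_neg h1, if_neg h2]
  simp

/-- `X₁` and `X₂` (that is, `Xe 0` and `Xe 1`) are not free with respect to `E`. -/
theorem X1_X2_not_free :
    ¬ (∀ L : List (ℕ × Polynomial ℂ), L ≠ [] →
        (∀ q ∈ L, q.1 = 0 ∨ q.1 = 1) →
        (L.map Prod.fst).Chain' (· ≠ ·) →
        (∀ q ∈ L, Ee (Polynomial.aeval (Xe q.1) q.2) = 0) →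
        Ee ((L.map fun q => Polynomial.aeval (Xe q.1) q.2).prod) = 0) := by
  intro h
  have := h [(1, Polynomial.X), (0, Polynomial.X), (1, Polynomial.X), (0, Polynomial.X),
      (1, Polynomial.X), (0, Polynomial.X)]
    (by simp)
    (by intro q hq; simp only [List.mem_cons, List.not_mem_nil, or_false] at hq
        rcases hq with rfl|rfl|rfl|rfl|rfl|rfl <;> simp)
    (by simp [List.Chain', List.isChain_cons_cons])
    (by intro q hq; simp only [List.mem_cons, List.not_mem_nil, or_false] at hq
        rcases hq with rfl|rfl|rfl|rfl|rfl|rfl <;>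
          simp [Polynomial.aeval_X, Ee_Xe])
  simp only [List.map_cons, List.map_nil, List.prod_cons, List.prod_nil, mul_one,
    Polynomial.aeval_X] at this
  exact Ee_prod_ne this
end
end

section
/- The sequence (X_i)_{i≥1} satisfies Condition A(1): for every k ≥ 1, every r ≥ 0, and all indices i_1, …, i_r ≥ 1 with i_s ≠ k for all s, E(X_k X_{i_1} ⋯ X_{i_r}) = 0. -/
noncomputable section

/-- The mod-3 exponent-sum of generator `k`. -/
def phiF (k : ℕ) : FreeGroup ℕ →* Multiplicative (ZMod 3) :=
  FreeGroup.lift (fun i => Multiplicative.ofAdd (if i = k then (1 : ZMod 3) else 0))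

lemma phiF_rel (k : ℕ) : ∀ w ∈ Subgroup.normalClosure relSet, phiF k w = 1 := by
  have h : Subgroup.normalClosure relSet ≤ (phiF k).ker := by
    apply Subgroup.normalClosure_le_normal
    rintro w ⟨j, hj, rfl⟩
    have key : ∀ x : Multiplicative (ZMod 3), x ^ 3 = 1 := by decide
    simp only [SetLike.mem_coe, MonoidHom.mem_ker, map_pow]
    exact key _
  exact fun w hw => h hw

/-- The induced map `G → ℤ/3`. -/
def phiG (k : ℕ) : G →* Multiplicative (ZMod 3) :=
  QuotientGroup.lift _ (phiF k) (phiF_rel k)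

lemma phiG_of (k i : ℕ) :
    phiG k (piG (FreeGroup.of i)) = Multiplicative.ofAdd (if i = k then (1 : ZMod 3) else 0) := by
  simp [phiG, piG, phiF]

lemma support_prod (k : ℕ) (L : List ℕ) (hL : ∀ i ∈ L, i ≠ k) :
    ∀ g ∈ ((L.map Xe).prod).coeff.support, phiG k g = 1 := by
  classical
  induction L with
  | nil =>
      intro g hg
      simp only [List.map_nil, List.prod_nil] at hg
      have : g = 1 := Finset.mem_singleton.mp (Finsupp.support_single_subset hg)
      simp [this]
  | cons i L ih =>
      intro g hg
      simp only [List.map_cons, List.prod_cons] at hg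
      have hg' := MonoidAlgebra.support_coeff_mul_subset _ _ hg
      rw [Finset.mem_mul] at hg'
      obtain ⟨a, ha, b, hb, rfl⟩ := hg'
      have hik : i ≠ k := hL i (List.mem_cons_self (a := i) (l := L))
      have hb1 : phiG k b = 1 := ih (fun j hj => hL j (List.mem_cons_of_mem _ hj)) b hb
      have ha1 : phiG k a = 1 := by
        have := Finsupp.support_add ha
        rw [Finset.mem_union] at this
        rcases this with h | h <;>
          have := Finset.mem_singleton.mp (Finsupp.support_single_subset h) <;>
          subst this <;> simp [phiG_of, hik]
      rw [map_mul, ha1, hb1, mul_one]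

/-- The sequence `(X_i)` satisfies Condition A(1): `E(X_k X_{i_1} ⋯ X_{i_r}) = 0`
whenever none of the `i_s` equals `k`.  (0-indexed: `Xe i` is `X_{i+1}`.) -/
theorem Xe_conditionA1 (k : ℕ) (L : List ℕ) (hL : ∀ i ∈ L, i ≠ k) :
    Ee (Xe k * (L.map Xe).prod) = 0 := by
  classical
  rw [Ee, ← Finsupp.notMem_support_iff]
  intro h1
  have h := MonoidAlgebra.support_coeff_mul_subset _ _ h1
  rw [Finset.mem_mul] at h
  obtain ⟨a, ha, b, hb, hab⟩ := h
  have hb1 : phiG k b = 1 := support_prod k L hL b hb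
  have ha1 : phiG k a = 1 → False := by
    have := Finsupp.support_add ha
    rw [Finset.mem_union] at this
    rcases this with h | h <;>
      have := Finset.mem_singleton.mp (Finsupp.support_single_subset h) <;>
      subst this <;> simp [phiG_of]
  apply ha1
  have : phiG k (a * b) = 1 := by rw [hab]; simp
  rwa [map_mul, hb1, mul_one] at this
end
end

section
/- The sequence (X_i)_{i≥1} satisfies Condition A(2): for every k ≥ 2, every r ≥ 0, and all indices i_1, …, i_r with 1 ≤ i_s < k for all s, E(X_k^2 X_{i_1} ⋯ X_{i_r}) = 2 · E(X_{i_1} ⋯ X_{i_r}). -/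
noncomputable section

/-- Auxiliary homomorphism from the free group to `ZMod 3`, sending `f_k ↦ 1` and all
other generators to `0`. -/
def phiZ (k : ℕ) : FreeGroup ℕ →* Multiplicative (ZMod 3) :=
  FreeGroup.lift fun i => Multiplicative.ofAdd (if i = k then 1 else 0)

lemma cube_eq_one : ∀ x : Multiplicative (ZMod 3), x ^ 3 = 1 := by decide

lemma phiZ_rel (k : ℕ) : Subgroup.normalClosure relSet ≤ (phiZ k).ker := by
  apply Subgroup.normalClosure_le_normal
  rintro w ⟨j, hj, rfl⟩
  simp only [SetLike.mem_coe, MonoidHom.mem_ker, map_pow]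
  exact cube_eq_one _

/-- The induced homomorphism `G →* Multiplicative (ZMod 3)`. -/
def psiZ (k : ℕ) : G →* Multiplicative (ZMod 3) :=
  QuotientGroup.lift _ (phiZ k) (fun _ hx => MonoidHom.mem_ker.mp (phiZ_rel k hx))

lemma psiZ_pi (k : ℕ) (w : FreeGroup ℕ) : psiZ k (piG w) = phiZ k w := rfl

lemma psiZ_of_lt {i k : ℕ} (h : i < k) : psiZ k (piG (FreeGroup.of i)) = 1 := by
  rw [psiZ_pi, phiZ, FreeGroup.lift_apply_of, if_neg (Nat.ne_of_lt h)]
  rfl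

/-- A product of `Xe i`'s with `i < k` is supported on the kernel of `psiZ k`. -/
lemma prod_supp (k : ℕ) (L : List ℕ) (hL : ∀ i ∈ L, i < k) (g : G)
    (hg : psiZ k g ≠ 1) : ((L.map Xe).prod).coeff g = 0 := by
  induction L generalizing g with
  | nil =>
    simp only [List.map_nil, List.prod_nil]
    rw [MonoidAlgebra.one_def, MonoidAlgebra.coeff_single]
    exact Finsupp.single_eq_of_ne' (fun h => hg (h ▸ map_one (psiZ k)))
  | cons i t ih =>
    have hi : i < k := hL i List.mem_cons_self
    have ht : ∀ j ∈ t, j < k := fun j hj => hL j (List.mem_cons_of_mem i hj)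
    set a : G := piG (FreeGroup.of i) with ha
    have hpa : psiZ k a = 1 := psiZ_of_lt hi
    simp only [List.map_cons, List.prod_cons, Xe, MonoidAlgebra.of_apply, ← ha]
    rw [add_mul, MonoidAlgebra.coeff_add, Finsupp.add_apply, MonoidAlgebra.coeff_single_mul_apply,
      MonoidAlgebra.coeff_single_mul_apply]
    have h1 : psiZ k (a⁻¹ * g) ≠ 1 := by
      rw [map_mul, map_inv, hpa, inv_one, one_mul]; exact hg
    have h2 : psiZ k (a⁻¹⁻¹ * g) ≠ 1 := by
      rw [map_mul, map_inv, map_inv, hpa, inv_one, inv_one, one_mul]; exact hg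
    rw [ih ht _ h1, ih ht _ h2]
    simp

/-- The sequence `(X_i)` satisfies Condition A(2):
`E(X_k² X_{i_1} ⋯ X_{i_r}) = 2 ⋅ E(X_{i_1} ⋯ X_{i_r})` whenever all `i_s < k`.
(0-indexed: `Xe i` is `X_{i+1}` of the paper, so "k ≥ 2" becomes `1 ≤ k`.) -/
theorem Xe_conditionA2 (k : ℕ) (hk : 1 ≤ k) (L : List ℕ) (hL : ∀ i ∈ L, i < k) :
    Ee (Xe k ^ 2 * (L.map Xe).prod) = 2 * Ee ((L.map Xe).prod) := by
  set w : GA := (L.map Xe).prod with hw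
  set a : G := piG (FreeGroup.of k) with ha
  have hpa : psiZ k a = Multiplicative.ofAdd (1 : ZMod 3) := by
    rw [ha, psiZ_pi, phiZ, FreeGroup.lift_apply_of, if_pos rfl]
  -- expand the square
  have hsq : Xe k ^ 2 = MonoidAlgebra.single (a * a) (1 : ℂ)
      + MonoidAlgebra.single (a⁻¹ * a⁻¹) (1 : ℂ) + 2 := by
    simp only [Xe, MonoidAlgebra.of_apply, ← ha, sq, add_mul, mul_add,
      MonoidAlgebra.single_mul_single, one_mul, mul_inv_cancel, inv_mul_cancel]
    rw [show (2 : GA) = MonoidAlgebra.single (1 : G) (1 : ℂ) + MonoidAlgebra.single 1 1 from by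
      rw [← MonoidAlgebra.one_def]; exact one_add_one_eq_two.symm]
    abel
  have key : ∀ g : G, psiZ k g ≠ 1 →
      (MonoidAlgebra.single g (1 : ℂ) * w).coeff 1 = 0 := by
    intro g hg
    rw [MonoidAlgebra.coeff_single_mul_apply, one_mul, mul_one]
    exact prod_supp k L hL _ (by
      rw [map_inv]
      intro h
      exact hg (by rwa [inv_eq_one] at h))
  have h1 : psiZ k (a * a) ≠ 1 := by
    rw [map_mul, hpa]
    decide
  have h2 : psiZ k (a⁻¹ * a⁻¹) ≠ 1 := by
    rw [map_mul, map_inv, hpa]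
    decide
  rw [hsq, add_mul, add_mul]
  have h3 : ((2 : GA) * w).coeff 1 = 2 * w.coeff 1 := by
    rw [two_mul, MonoidAlgebra.coeff_add, Finsupp.add_apply, ← two_mul]
  simp only [Ee]
  rw [MonoidAlgebra.coeff_add, MonoidAlgebra.coeff_add, Finsupp.add_apply, Finsupp.add_apply, key _ h1, key _ h2, h3]
  ring
end
end

section
/- Let k ≥ 2 and let u, v be elements of the subgroup of G generated by {f̄_i : 1 ≤ i < k}. If u ≠ 1 and v ≠ 1 in G, then f̄_k u f̄_k^{−1} v ≠ 1 in G. -/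
noncomputable section

namespace ConjAux

/-- Shift action of `ZMod 3` on the pi group `ZMod 3 → G`. -/
def shiftHom : Multiplicative (ZMod 3) →* MulAut (ZMod 3 → G) where
  toFun c := MulEquiv.arrowCongr (Equiv.addRight c.toAdd) (MulEquiv.refl G)
  map_one' := by
    ext F j
    simp [MulEquiv.arrowCongr]
    rfl
  map_mul' c c' := by
    ext F j
    show F _ = F _
    congr 1
    simp only [Equiv.Perm.mul_def, Equiv.symm_trans_apply, Equiv.addRight_symm,
      Equiv.coe_addRight, toAdd_mul]
    ring

/-- The wreath-type product `(ZMod 3 → G) ⋊ ZMod 3`. -/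
abbrev W : Type := (ZMod 3 → G) ⋊[shiftHom] Multiplicative (ZMod 3)

/-- Embedding of `G` into the `0`-th coordinate of the base. -/
def iota : G →* W :=
  SemidirectProduct.inl.comp (MonoidHom.mulSingle (fun _ : ZMod 3 => G) 0)

/-- The shift element of `W`. -/
def sh : W := SemidirectProduct.inr (Multiplicative.ofAdd (1 : ZMod 3))

lemma sh_cube : sh ^ 3 = 1 := by
  have h : (Multiplicative.ofAdd (1 : ZMod 3)) ^ 3 = 1 := by decide
  rw [sh, ← map_pow, h, map_one]

/-- Auxiliary value of the homomorphism on generators `f_{k+m}`. -/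
def daux (k : ℕ) : ℕ → W
  | 0 => sh * (iota (piG (FreeGroup.of (k - 1))))⁻¹
  | m + 1 => sh * (daux k m)⁻¹

/-- Value of the homomorphism on generators. -/
def d (k i : ℕ) : W := if i < k then iota (piG (FreeGroup.of i)) else daux k (i - k)

lemma d_mul_cube (k : ℕ) (hk : 1 ≤ k) (j : ℕ) (hj : 1 ≤ j) :
    (d k j * d k (j - 1)) ^ 3 = 1 := by
  rcases lt_trichotomy j k with h | rfl | h
  · have h1 : j - 1 < k := lt_of_le_of_lt (Nat.sub_le _ _) h
    have hrel : piG ((FreeGroup.of j * FreeGroup.of (j - 1)) ^ 3) = 1 :=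
      (QuotientGroup.eq_one_iff _).2
        (Subgroup.subset_normalClosure ⟨j, hj, rfl⟩)
    simp only [d, if_pos h, if_pos h1, ← map_mul, ← map_pow]
    rw [hrel, map_one]
  · have h1 : j - 1 < j := Nat.sub_lt (by omega) one_pos
    have hd : d j j = sh * (iota (piG (FreeGroup.of (j - 1))))⁻¹ := by
      simp [d, daux]
    have hd1 : d j (j - 1) = iota (piG (FreeGroup.of (j - 1))) := by
      simp [d, h1]
    rw [hd, hd1, inv_mul_cancel_right, sh_cube]
  · have h1 : ¬ j < k := by omega
    have h2 : ¬ j - 1 < k := by omega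
    have h3 : j - k = (j - 1 - k) + 1 := by omega
    simp only [d, if_neg h1, if_neg h2, h3, daux, inv_mul_cancel_right, sh_cube]

/-- The homomorphism `G → W`. -/
def delta (k : ℕ) (hk : 1 ≤ k) : G →* W :=
  QuotientGroup.lift _ (FreeGroup.lift (d k)) (by
    apply Subgroup.normalClosure_le_normal
    rintro w ⟨j, hj, rfl⟩
    have : (FreeGroup.lift (d k)) ((FreeGroup.of j * FreeGroup.of (j - 1)) ^ 3) = 1 := by
      rw [map_pow, map_mul, FreeGroup.lift_apply_of, FreeGroup.lift_apply_of]
      exact d_mul_cube k hk j hj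
    exact this)

lemma delta_piG (k : ℕ) (hk : 1 ≤ k) (x : FreeGroup ℕ) :
    delta k hk (piG x) = FreeGroup.lift (d k) x := rfl

lemma delta_eq_iota (k : ℕ) (hk : 1 ≤ k) (x : G)
    (hx : x ∈ Subgroup.closure {g : G | ∃ i < k, g = piG (FreeGroup.of i)}) :
    delta k hk x = iota x := by
  induction hx using Subgroup.closure_induction with
  | mem g hg =>
    obtain ⟨i, hi, rfl⟩ := hg
    rw [delta_piG, FreeGroup.lift_apply_of]
    simp [d, hi]
  | one => simp
  | mul a b _ _ iha ihb => rw [map_mul, map_mul, iha, ihb]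
  | inv a _ iha => rw [map_inv, map_inv, iha]

end ConjAux

open ConjAux in
/-- If `u, v` are nontrivial elements of the subgroup of `G` generated by the generators
below `f̄_k` (0-indexed: `piG (FreeGroup.of i)` is `f̄_{i+1}` of the paper, so "k ≥ 2"
becomes `1 ≤ k`), then `f̄_k u f̄_k⁻¹ v ≠ 1` in `G`. -/
theorem conjugate_product_nontrivial (k : ℕ) (hk : 1 ≤ k) (u v : G)
    (hu : u ∈ Subgroup.closure {g : G | ∃ i < k, g = piG (FreeGroup.of i)})
    (hv : v ∈ Subgroup.closure {g : G | ∃ i < k, g = piG (FreeGroup.of i)})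
    (hu1 : u ≠ 1) (hv1 : v ≠ 1) :
    piG (FreeGroup.of k) * u * (piG (FreeGroup.of k))⁻¹ * v ≠ 1 := by
  intro h
  set w : G := piG (FreeGroup.of (k - 1)) with hw
  set u₀ : G := w⁻¹ * u * w with hu₀def
  have hu₀ : u₀ ≠ 1 := by
    intro h1
    apply hu1
    have := congrArg (fun x => w * x * w⁻¹) h1
    simpa [hu₀def, mul_assoc] using this
  have h' := congrArg (delta k hk) h
  rw [map_one, map_mul, map_mul, map_mul, map_inv] at h'
  have hdk : delta k hk (piG (FreeGroup.of k)) = sh * (iota w)⁻¹ := by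
    rw [delta_piG, FreeGroup.lift_apply_of]
    simp [d, daux, hw]
  rw [hdk, delta_eq_iota k hk u hu, delta_eq_iota k hk v hv] at h'
  have hrw : sh * (iota w)⁻¹ * iota u * (sh * (iota w)⁻¹)⁻¹ * iota v
      = sh * iota u₀ * sh⁻¹ * iota v := by
    rw [hu₀def, map_mul, map_mul, map_inv]
    group
  rw [hrw] at h'
  -- unfold iota into `inl ∘ mulSingle`
  have hiu : iota u₀ = SemidirectProduct.inl (Pi.mulSingle (0 : ZMod 3) u₀) := rfl
  have hiv : iota v = SemidirectProduct.inl (Pi.mulSingle (0 : ZMod 3) v) := rfl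
  rw [hiu, hiv, sh, ← map_inv, ← SemidirectProduct.inl_aut, ← map_mul] at h'
  have h'' := SemidirectProduct.inl_injective (h'.trans (map_one SemidirectProduct.inl).symm)
  have h1 := congrFun h'' (1 : ZMod 3)
  have hzero : (1 : ZMod 3) + -(Multiplicative.ofAdd (1 : ZMod 3)).toAdd = 0 := by decide
  have hsh : shiftHom (Multiplicative.ofAdd (1 : ZMod 3))
      (Pi.mulSingle (M := fun _ : ZMod 3 => G) 0 u₀) 1 = u₀ := by
    show Pi.mulSingle (M := fun _ : ZMod 3 => G) 0 u₀
        ((1 : ZMod 3) + -(Multiplicative.ofAdd (1 : ZMod 3)).toAdd) = u₀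
    rw [hzero, Pi.mulSingle_eq_same]
  have hms : Pi.mulSingle (M := fun _ : ZMod 3 => G) 0 v (1 : ZMod 3) = 1 := by
    apply Pi.mulSingle_eq_of_ne
    decide
  rw [Pi.mul_apply, hsh, hms, mul_one, Pi.one_apply] at h1
  exact hu₀ h1
end
end
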